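/- arXiv:0704.2025 — 13 statements merged into one kernel-verified Lean document; each statement's English description precedes it below -/
import Mathlib

section
/- Let {B_n} and {C_n} be strictly increasing sequences of positive reals with B_1/B_2 ≤ C_1/C_2. If for every integer n ≥ 1, (B_{n+1} - B_n)/(B_{n+2} - B_{n+1}) ≤ (C_{n+1} - C_n)/(C_{n+2} - C_{n+1}), then B_n/B_{n+1} ≤ C_n/C_{n+1} for every integer n ≥ 1. -/
/-!
With `x = b₁ / b₂` and `y = (b₂ - b₁) / (b₃ - b₂)` one has `b₂ / b₃ = 1 / (1 + (1 - x) / y)`,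
which is increasing in both `x < 1` and `y > 0`. So the ratio of consecutive terms at step `n + 1`
is controlled by the ratio at step `n` and the ratio of consecutive differences, and the
theorem follows by induction on `n`.
-/

lemma div_eq_one_div_one_add_div_diff_ratio {b₁ b₂ b₃ : ℝ} (h₂ : b₂ ≠ 0) (h₁₂ : b₁ ≠ b₂)
    (h₂₃ : b₂ ≠ b₃) :
    b₂ / b₃ = 1 / (1 + (1 - b₁ / b₂) / ((b₂ - b₁) / (b₃ - b₂))) := by
  have : b₂ - b₁ ≠ 0 := sub_ne_zero.2 h₁₂.symm
  have : b₃ - b₂ ≠ 0 := sub_ne_zero.2 h₂₃.symm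
  field_simp
  ring

lemma one_div_one_add_div_le {x x' y y' : ℝ} (hx : x ≤ x') (hx' : x' < 1) (hy : 0 < y)
    (hy' : y ≤ y') : 1 / (1 + (1 - x) / y) ≤ 1 / (1 + (1 - x') / y') := by
  have : 0 ≤ 1 - x' := by linarith
  have : 0 ≤ 1 - x := by linarith
  have : 0 < y' := hy.trans_le hy'
  gcongr

lemma div_le_div_of_diff_ratio_le {b₁ b₂ b₃ c₁ c₂ c₃ : ℝ}
    (hb₁ : 0 < b₁) (hb₁₂ : b₁ < b₂) (hb₂₃ : b₂ < b₃)
    (hc₁ : 0 < c₁) (hc₁₂ : c₁ < c₂) (hc₂₃ : c₂ < c₃)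
    (hratio : b₁ / b₂ ≤ c₁ / c₂)
    (hdiff : (b₂ - b₁) / (b₃ - b₂) ≤ (c₂ - c₁) / (c₃ - c₂)) :
    b₂ / b₃ ≤ c₂ / c₃ := by
  rw [div_eq_one_div_one_add_div_diff_ratio (hb₁.trans hb₁₂).ne' hb₁₂.ne hb₂₃.ne,
    div_eq_one_div_one_add_div_diff_ratio (hc₁.trans hc₁₂).ne' hc₁₂.ne hc₂₃.ne]
  refine one_div_one_add_div_le hratio ?_ (div_pos (by linarith) (by linarith)) hdiff
  exact (div_lt_one (hc₁.trans hc₁₂)).2 hc₁₂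

theorem stmt_0 (B C : ℕ → ℝ)
    (hBpos : ∀ n, 1 ≤ n → 0 < B n) (hCpos : ∀ n, 1 ≤ n → 0 < C n)
    (hBmono : ∀ n, 1 ≤ n → B n < B (n + 1)) (hCmono : ∀ n, 1 ≤ n → C n < C (n + 1))
    (h12 : B 1 / B 2 ≤ C 1 / C 2)
    (h : ∀ n, 1 ≤ n →
      (B (n + 1) - B n) / (B (n + 2) - B (n + 1)) ≤ (C (n + 1) - C n) / (C (n + 2) - C (n + 1))) :
    ∀ n, 1 ≤ n → B n / B (n + 1) ≤ C n / C (n + 1) := by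
  intro n hn
  induction n, hn using Nat.le_induction with
  | base => exact h12
  | succ n hn ih =>
    exact div_le_div_of_diff_ratio_le (hBpos n hn) (hBmono n hn) (hBmono (n + 1) (by omega))
      (hCpos n hn) (hCmono n hn) (hCmono (n + 1) (by omega)) ih (h n hn)
end

section
/- For fixed r ≥ 2, the divided-difference function D_r(x,y) = (x^r - y^r)/(x - y) (extended by D_r(x,x) = r x^{r-1}) is Schur convex on (0,∞) × (0,∞); that is, if a ≥ b > 0, c ≥ d > 0, c ≤ a, and a + b = c + d, then D_r(c,d) ≤ D_r(a,b). -/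
/-!
Write `a, b = m ± u` and `c, d = m ± v` with `0 ≤ v ≤ u ≤ m`. For `w ≠ 0`,
`D r (m + w) (m - w) = G w / (2 w)` with `G w = (m + w) ^ r - (m - w) ^ r`, i.e. half the slope
of `G` between `0` and `w`; for `w = 0` it is half of `G' 0`. Since
`G' w = r ((m + w) ^ (r - 1) + (m - w) ^ (r - 1))` and `t ↦ t ^ (r - 1)` is convex for `r ≥ 2`,
`G'` is nondecreasing on `[0, m]`, so `G` is convex there and its slopes from `0` increase with `w`.
-/

noncomputable def D (r x y : ℝ) : ℝ :=
  if x = y then r * x ^ (r - 1) else (x ^ r - y ^ r) / (x - y)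

open Set

theorem ConvexOn.add_comp_sub_le {𝕜 : Type*} [Field 𝕜] [LinearOrder 𝕜] [IsStrictOrderedRing 𝕜]
    {s : Set 𝕜} {f : 𝕜 → 𝕜} (hf : ConvexOn 𝕜 s f) {m u v : 𝕜}
    (hu₁ : m + u ∈ s) (hu₂ : m - u ∈ s) (hvu : |v| ≤ u) :
    f (m + v) + f (m - v) ≤ f (m + u) + f (m - u) := by
  obtain ⟨hvu₁, hvu₂⟩ := abs_le.mp hvu
  rcases (neg_le_self_iff.mp (hvu₁.trans hvu₂)).eq_or_lt with rfl | hu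
  · obtain rfl : v = 0 := by linarith
    rfl
  -- `m ± v` is the convex combination of `m + u` and `m - u` with weights `(u ± v) / 2u`.
  have hα : 0 ≤ (u + v) / (2 * u) := div_nonneg (by linarith) (by linarith)
  have hβ : 0 ≤ (u - v) / (2 * u) := div_nonneg (by linarith) (by linarith)
  have hαβ : (u + v) / (2 * u) + (u - v) / (2 * u) = 1 := by field_simp; ring
  have h₁ := hf.2 hu₁ hu₂ hα hβ hαβ
  have h₂ := hf.2 hu₁ hu₂ hβ hα (by rw [add_comm, hαβ])
  simp only [smul_eq_mul] at h₁ h₂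
  have e₁ : (u + v) / (2 * u) * (m + u) + (u - v) / (2 * u) * (m - u) = m + v := by
    field_simp; ring
  have e₂ : (u - v) / (2 * u) * (m + u) + (u + v) / (2 * u) * (m - u) = m - v := by
    field_simp; ring
  rw [e₁] at h₁
  rw [e₂] at h₂
  linear_combination h₁ + h₂ + (f (m + u) + f (m - u)) * hαβ

theorem monotoneOn_rpow_add_add_rpow_sub {p m : ℝ} (hp : 1 ≤ p) :
    MonotoneOn (fun w => (m + w) ^ p + (m - w) ^ p) (Icc 0 m) := by
  intro v ⟨hv, _⟩ u ⟨_, hum⟩ hvu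
  exact (convexOn_rpow hp).add_comp_sub_le (by simp only [mem_Ici]; linarith)
    (by simp only [mem_Ici]; linarith) (abs_le.mpr ⟨by linarith, hvu⟩)

theorem hasDerivAt_rpow_add_sub_rpow_sub {r : ℝ} (hr : 1 ≤ r) (m w : ℝ) :
    HasDerivAt (fun w => (m + w) ^ r - (m - w) ^ r)
      (r * ((m + w) ^ (r - 1) + (m - w) ^ (r - 1))) w := by
  have h₁ := ((hasDerivAt_id w).const_add m).rpow_const (p := r) (Or.inr hr)
  have h₂ := ((hasDerivAt_id w).const_sub m).rpow_const (p := r) (Or.inr hr)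
  exact (h₁.sub h₂).congr_deriv (by simp only [id]; ring)

theorem convexOn_rpow_add_sub_rpow_sub {r m : ℝ} (hr : 2 ≤ r) :
    ConvexOn ℝ (Icc 0 m) (fun w => (m + w) ^ r - (m - w) ^ r) := by
  have hderiv := fun w => hasDerivAt_rpow_add_sub_rpow_sub (by linarith) m w
  refine MonotoneOn.convexOn_of_deriv (convex_Icc 0 m)
    (HasDerivAt.continuousOn fun w _ => hderiv w)
    (fun w _ => (hderiv w).differentiableAt.differentiableWithinAt) ?_
  rw [funext fun w => (hderiv w).deriv]
  intro v hv u hu hvu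
  have hmono := monotoneOn_rpow_add_add_rpow_sub (m := m) (p := r - 1) (by linarith)
  exact mul_le_mul_of_nonneg_left (hmono (interior_subset hv) (interior_subset hu) hvu)
    (by linarith)

theorem D_add_sub_eq_slope (r m : ℝ) {w : ℝ} (hw : w ≠ 0) :
    D r (m + w) (m - w) = slope (fun w => (m + w) ^ r - (m - w) ^ r) 0 w / 2 := by
  have hne : m + w ≠ m - w := fun h => hw (by linarith)
  rw [D, if_neg hne, slope_def_field]
  simp only [add_zero, sub_zero, sub_self]
  field_simp
  ring

theorem D_add_sub_le {r m u v : ℝ} (hr : 2 ≤ r) (hv : 0 ≤ v) (hvu : v ≤ u) (hum : u ≤ m) :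
    D r (m + v) (m - v) ≤ D r (m + u) (m - u) := by
  have hconv := convexOn_rpow_add_sub_rpow_sub (m := m) hr
  have h0 : (0 : ℝ) ∈ Icc 0 m := ⟨le_rfl, hv.trans (hvu.trans hum)⟩
  rcases hv.eq_or_lt with rfl | hv
  · rcases hvu.eq_or_lt with rfl | hu
    · rfl
    rw [D_add_sub_eq_slope r m hu.ne', add_zero, sub_zero, D, if_pos rfl]
    have := hconv.le_slope_of_hasDerivAt h0 ⟨hu.le, hum⟩ hu
      (hasDerivAt_rpow_add_sub_rpow_sub (by linarith) m 0)
    simp only [add_zero, sub_zero] at this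
    linarith
  · rw [D_add_sub_eq_slope r m hv.ne', D_add_sub_eq_slope r m (hv.trans_le hvu).ne']
    gcongr
    exact hconv.slope_mono h0 ⟨⟨hv.le, hvu.trans hum⟩, hv.ne'⟩
      ⟨⟨hv.le.trans hvu, hum⟩, (hv.trans_le hvu).ne'⟩ hvu

theorem stmt_2_general (r a b c d : ℝ) (hr : 2 ≤ r)
    (hb : 0 < b) (hcd : d ≤ c) (hca : c ≤ a)
    (hsum : a + b = c + d) : D r c d ≤ D r a b := by
  have key := D_add_sub_le (m := (a + b) / 2) (u := (a - b) / 2) (v := (c - d) / 2) hr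
    (by linarith) (by linarith) (by linarith)
  convert key using 2 <;> linarith

theorem stmt_2 (r a b c d : ℝ) (hr : 2 ≤ r)
    (hb : 0 < b) (hd : 0 < d) (hab : b ≤ a) (hcd : d ≤ c) (hca : c ≤ a)
    (hsum : a + b = c + d) : D r c d ≤ D r a b :=
  stmt_2_general r a b c d hr hb hcd hca hsum
end

section
/- Let r ≥ 2 and let a, b, c, d be positive reals with a ≥ max(b, c, d) and a + b ≥ c + d. Then D_r(a,b) ≥ D_r(c,d), where D_r(x,y) = (x^r - y^r)/(x - y) for x ≠ y and D_r(x,x) = r x^{r-1}. -/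
open Set intervalIntegral

section Convex

variable {s : Set ℝ} {f : ℝ → ℝ}

/-- `w` and `u + v - w` are mirror-image convex combinations of `v` and `u`. -/
theorem ConvexOn.map_add_map_add_sub_le (hf : ConvexOn ℝ s f) {u v w : ℝ} (hu : u ∈ s) (hv : v ∈ s)
    (hvw : v ≤ w) (hwu : w ≤ u) : f w + f (u + v - w) ≤ f u + f v := by
  rcases hvw.eq_or_lt with rfl | hvw
  · simp [add_comm]
  set l := (u - w) / (u - v)
  have hl : l * (u - v) = u - w := div_mul_cancel₀ _ (by linarith)
  have hl0 : 0 ≤ l := div_nonneg (by linarith) (by linarith)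
  have hl1 : l ≤ 1 := (div_le_one (by linarith)).mpr (by linarith)
  have h₁ := hf.2 hv hu hl0 (sub_nonneg.mpr hl1) (add_sub_cancel l 1)
  have h₂ := hf.2 hv hu (sub_nonneg.mpr hl1) hl0 (sub_add_cancel 1 l)
  simp only [smul_eq_mul] at h₁ h₂
  rw [show l * v + (1 - l) * u = w by linear_combination -hl] at h₁
  rw [show (1 - l) * v + l * u = u + v - w by linear_combination hl] at h₂
  linarith

theorem ConvexOn.map_add_map_le_of_le_of_add_le (hf : ConvexOn ℝ s f) (hmono : MonotoneOn f s)
    {u v u' v' : ℝ} (hu : u ∈ s) (hv : v ∈ s) (hu' : u' ∈ s) (hv' : v' ∈ s)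
    (hu'u : u' ≤ u) (hv'u : v' ≤ u) (hsum : u' + v' ≤ u + v) :
    f u' + f v' ≤ f u + f v := by
  rcases le_or_gt v' v with hv'v | hvv'
  · exact add_le_add (hmono hu' hu hu'u) (hmono hv' hv hv'v)
  have hw : u + v - v' ∈ s := hf.1.ordConnected.out hv hu ⟨by linarith, by linarith⟩
  have := hmono hu' hw (by linarith : u' ≤ u + v - v')
  linarith [hf.map_add_map_add_sub_le hu hv hvv'.le hv'u]

theorem ConvexOn.map_add_map_convexComb_le (hf : ConvexOn ℝ s f) (hmono : MonotoneOn f s)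
    {a b c d : ℝ} (ha : a ∈ s) (hb : b ∈ s) (hc : c ∈ s) (hd : d ∈ s)
    (hca : c ≤ a) (hda : d ≤ a) (hsum : c + d ≤ a + b)
    {t : ℝ} (ht : t ∈ Icc (0 : ℝ) 1) :
    f (t * c + (1 - t) * d) + f ((1 - t) * c + t * d)
      ≤ f (t * a + (1 - t) * b) + f ((1 - t) * a + t * b) := by
  wlog ht' : 1 / 2 ≤ t generalizing t
  · have := this (t := 1 - t) ⟨by linarith [ht.2], by linarith [ht.1]⟩ (by linarith)
    rw [sub_sub_cancel] at this
    linarith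
  obtain ⟨ht0, ht1⟩ := ht
  have mem {x y : ℝ} (hx : x ∈ s) (hy : y ∈ s) (τ : ℝ) (hτ0 : 0 ≤ τ) (hτ1 : τ ≤ 1) :
      τ * x + (1 - τ) * y ∈ s := hf.1 hx hy hτ0 (sub_nonneg.mpr hτ1) (add_sub_cancel τ 1)
  have mem' {x y : ℝ} (hx : x ∈ s) (hy : y ∈ s) (τ : ℝ) (hτ0 : 0 ≤ τ) (hτ1 : τ ≤ 1) :
      (1 - τ) * x + τ * y ∈ s := by
    simpa [add_comm] using mem hy hx τ hτ0 hτ1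
  apply hf.map_add_map_le_of_le_of_add_le hmono (mem ha hb t ht0 ht1) (mem' ha hb t ht0 ht1)
    (mem hc hd t ht0 ht1) (mem' hc hd t ht0 ht1) <;> nlinarith

end Convex

theorem D_eq_integral {r : ℝ} (hr : 0 < r) (x y : ℝ) :
    D r x y = r * ∫ t in (0 : ℝ)..1, (t * x + (1 - t) * y) ^ (r - 1) := by
  rcases eq_or_ne x y with rfl | hxy
  · have (t : ℝ) : t * x + (1 - t) * x = x := by ring
    simp [D, this]
  have hne : x - y ≠ 0 := sub_ne_zero.mpr hxy
  have h := integral_comp_mul_add (a := 0) (b := 1) (fun s : ℝ => s ^ (r - 1)) hne y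
  simp only [mul_zero, zero_add, mul_one, sub_add_cancel, smul_eq_mul] at h
  rw [integral_rpow (Or.inl (by linarith)), sub_add_cancel] at h
  have hpath (t : ℝ) : t * x + (1 - t) * y = (x - y) * t + y := by ring
  simp only [hpath, h, D, if_neg hxy]
  field_simp

theorem intervalIntegral.integral_add_comp_one_sub {g : ℝ → ℝ} (hg : Continuous g) :
    ∫ t in (0 : ℝ)..1, (g t + g (1 - t)) = 2 * ∫ t in (0 : ℝ)..1, g t := by
  have hg' : Continuous fun t => g (1 - t) := hg.comp (continuous_sub_left 1)
  rw [integral_add (hg.intervalIntegrable 0 1) (hg'.intervalIntegrable 0 1),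
    integral_comp_sub_left g 1]
  norm_num [two_mul]

theorem two_mul_D_eq_integral {r : ℝ} (hr : 1 ≤ r) (x y : ℝ) :
    2 * D r x y = r * ∫ t in (0 : ℝ)..1,
      ((t * x + (1 - t) * y) ^ (r - 1) + ((1 - t) * x + t * y) ^ (r - 1)) := by
  have hg : Continuous fun t : ℝ => (t * x + (1 - t) * y) ^ (r - 1) := by
    fun_prop (disch := linarith)
  have h := integral_add_comp_one_sub hg
  simp only [sub_sub_cancel] at h
  rw [h, D_eq_integral (by linarith)]
  ring

theorem stmt_3 (r a b c d : ℝ) (hr : 2 ≤ r)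
    (hb : 0 < b) (hc : 0 < c) (hd : 0 < d)
    (ha : max b (max c d) ≤ a) (hsum : c + d ≤ a + b) :
    D r c d ≤ D r a b := by
  have hca : c ≤ a := (le_max_left c d).trans ((le_max_right b _).trans ha)
  have hda : d ≤ a := (le_max_right c d).trans ((le_max_right b _).trans ha)
  have hconvex := convexOn_rpow (by linarith : 1 ≤ r - 1)
  have hmono := Real.monotoneOn_rpow_Ici_of_exponent_nonneg (by linarith : 0 ≤ r - 1)
  have hint := integral_mono_on (μ := MeasureTheory.volume) zero_le_one
    ((by fun_prop (disch := linarith) : Continuous _).intervalIntegrable 0 1)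
    ((by fun_prop (disch := linarith) : Continuous _).intervalIntegrable 0 1) fun t ht =>
      hconvex.map_add_map_convexComb_le hmono (mem_Ici.mpr (hc.le.trans hca)) (mem_Ici.mpr hb.le)
        (mem_Ici.mpr hc.le) (mem_Ici.mpr hd.le) hca hda hsum ht
  have h2D := two_mul_D_eq_integral (by linarith : 1 ≤ r)
  linarith [h2D c d, h2D a b, mul_le_mul_of_nonneg_left hint (by linarith : (0 : ℝ) ≤ r)]
end

section
/- For all real r ≥ 1 and α ≥ 2, one has 1 + 2^{α(r+1)-1} ≥ (1 + 2^r)^α. -/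
/-!
Put `x = 2 ^ r ≥ 2`; the claim is `(1 + x) ^ α ≤ 1 + 2 ^ (α - 1) * x ^ α`. By convexity of
`t ↦ t ^ α`, the increment `(u + x) ^ α - u ^ α` grows with `u`, so for `u = 1 ≤ x / 2` it is at
most its value `((3/2) ^ α - (1/2) ^ α) * x ^ α` at `u = x / 2`. The remaining one-variable
inequality `(3/2) ^ α - (1/2) ^ α ≤ 2 ^ (α - 1)`, an equality at `α = 2`, becomes
`9 * 3 ^ s ≤ 8 * 4 ^ s + 1` for `s = α - 2 ≥ 0`; since `3 ^ 9 ≤ 4 ^ 8`, this follows from the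
weighted AM-GM inequality `(4 ^ s) ^ (8/9) * 1 ^ (1/9) ≤ 8/9 * 4 ^ s + 1/9`.
-/

open Set

theorem ConvexOn.sub_le_sub_of_le {𝕜 : Type*} [Field 𝕜] [LinearOrder 𝕜] [IsStrictOrderedRing 𝕜]
    {s : Set 𝕜} {f : 𝕜 → 𝕜} (hf : ConvexOn 𝕜 s f) {x y d : 𝕜} (hx : x ∈ s) (hyd : y + d ∈ s)
    (hd : 0 < d) (hxy : x ≤ y) : f (x + d) - f x ≤ f (y + d) - f y := by
  have hmem : Icc x (y + d) ⊆ s := hf.1.ordConnected.out hx hyd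
  have hxd : x + d ∈ s := hmem ⟨by linarith, by linarith⟩
  have hy : y ∈ s := hmem ⟨hxy, by linarith⟩
  have h₁ := hf.secant_mono hx hxd hyd (by linarith) (by linarith) (by linarith)
  have h₂ := hf.secant_mono hyd hx hy (by linarith) (by linarith) hxy
  rw [← neg_sub (f (y + d)), ← neg_sub (y + d), neg_div_neg_eq, ← neg_sub (f (y + d)) (f y),
    ← neg_sub (y + d) y, neg_div_neg_eq, add_sub_cancel_left] at h₂
  rw [add_sub_cancel_left] at h₁
  exact (div_le_div_iff_of_pos_right hd).1 (h₁.trans h₂)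

theorem nine_mul_three_rpow_le {s : ℝ} (hs : 0 ≤ s) : 9 * (3 : ℝ) ^ s ≤ 8 * (4 : ℝ) ^ s + 1 := by
  have h₃ : (3 : ℝ) ≤ (4 : ℝ) ^ (8 / 9 : ℝ) := by
    refine le_of_pow_le_pow_left₀ (n := 9) (by norm_num) (by positivity) ?_
    rw [← Real.rpow_mul_natCast (by norm_num)]
    norm_num
  calc 9 * (3 : ℝ) ^ s ≤ 9 * (((4 : ℝ) ^ s) ^ (8 / 9 : ℝ) * 1 ^ (1 / 9 : ℝ)) := by
        rw [Real.one_rpow, mul_one, ← Real.rpow_mul (by norm_num), mul_comm s,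
          Real.rpow_mul (by norm_num)]
        gcongr
    _ ≤ 9 * (8 / 9 * (4 : ℝ) ^ s + 1 / 9 * 1) := by
        gcongr
        exact Real.geom_mean_le_arith_mean2_weighted (by norm_num) (by norm_num) (by positivity)
          zero_le_one (by norm_num)
    _ = 8 * (4 : ℝ) ^ s + 1 := by ring

theorem three_halves_rpow_sub_half_rpow_le {α : ℝ} (hα : 2 ≤ α) :
    (3 / 2 : ℝ) ^ α - (1 / 2 : ℝ) ^ α ≤ 2 ^ (α - 1) := by
  obtain ⟨s, hs, rfl⟩ : ∃ s, 0 ≤ s ∧ α = s + 2 := ⟨α - 2, by linarith, by ring⟩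
  have h2 : (0 : ℝ) < 2 ^ (s + 2) := by positivity
  rw [Real.div_rpow (by norm_num) (by norm_num), Real.div_rpow (by norm_num) (by norm_num),
    Real.one_rpow, ← sub_div, div_le_iff₀ h2, Real.rpow_sub_one (by norm_num),
    div_mul_eq_mul_div, ← Real.mul_rpow (by norm_num) (by norm_num),
    Real.rpow_add (by norm_num), Real.rpow_add (by norm_num), Real.rpow_two, Real.rpow_two]
  linarith [nine_mul_three_rpow_le hs]

theorem one_add_rpow_le {α x : ℝ} (hα : 2 ≤ α) (hx : 2 ≤ x) :
    (1 + x) ^ α ≤ 1 + 2 ^ (α - 1) * x ^ α := by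
  have hconv := (convexOn_rpow (by linarith : 1 ≤ α)).sub_le_sub_of_le (x := 1) (y := x / 2)
    (d := x) (mem_Ici.2 zero_le_one) (mem_Ici.2 (by linarith)) (by linarith) (by linarith)
  have hscale : (x / 2 + x) ^ α - (x / 2) ^ α = ((3 / 2 : ℝ) ^ α - (1 / 2 : ℝ) ^ α) * x ^ α := by
    rw [show x / 2 + x = 3 / 2 * x by ring, show x / 2 = 1 / 2 * x by ring,
      Real.mul_rpow (by norm_num) (by linarith), Real.mul_rpow (by norm_num) (by linarith)]
    ring
  rw [Real.one_rpow, hscale] at hconv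
  have hbase := mul_le_mul_of_nonneg_right (three_halves_rpow_sub_half_rpow_le hα)
    (by positivity : (0 : ℝ) ≤ x ^ α)
  linarith

theorem stmt_5 (r α : ℝ) (hr : 1 ≤ r) (hα : 2 ≤ α) :
    (1 + (2 : ℝ) ^ r) ^ α ≤ 1 + (2 : ℝ) ^ (α * (r + 1) - 1) := by
  have hx : (2 : ℝ) ≤ 2 ^ r := by
    simpa using Real.rpow_le_rpow_of_exponent_le one_le_two hr
  have hsplit : (2 : ℝ) ^ (α * (r + 1) - 1) = 2 ^ (α - 1) * (2 ^ r) ^ α := by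
    rw [← Real.rpow_mul zero_le_two, ← Real.rpow_add two_pos]
    ring_nf
  rw [hsplit]
  exact one_add_rpow_le hα hx
end

section
/- For all real r ≥ 1, the function f(x) = ln(2x)·2x² − ln(1+x)·(1+x)² satisfies f(2^r) > 0; equivalently, ln(2^{r+1})·2^{2(r+1)-1} > ln(1+2^r)·(1+2^r)². -/
/-!
Write `x = 2 ^ r ≥ 2`. Splitting `log (1 + x) = log (2 * x) - log (2 * x / (1 + x))` gives
`log (2x) · 2x² - log (1+x) · (1+x)² = log (2x) · (x² - 2x - 1) + log (2x / (1+x)) · (1+x)²`.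
The first coefficient is at least `-1` and the second logarithm at least `1/4`, while `log (2x)`
grows only like `x / 2`, so the quadratic `(1+x)² / 4` wins.
-/

open Real

lemma Real.log_two_mul_lt_half_add_one {x : ℝ} (hx : 0 < x) : log (2 * x) < x / 2 + 1 := by
  have hsplit : log (2 * x) = log (x / 2) + 2 * log 2 := by
    rw [show 2 * x = x / 2 * 2 ^ 2 by ring, log_mul (by positivity) (by positivity), log_pow]
    push_cast
    ring
  linarith [log_le_sub_one_of_pos (half_pos hx), log_two_lt_d9]

lemma Real.quarter_le_log_two_mul_div_one_add {x : ℝ} (hx : 2 ≤ x) :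
    1 / 4 ≤ log (2 * x / (1 + x)) := by
  have hpos : 0 < 2 * x / (1 + x) := by positivity
  refine le_trans ?_ (one_sub_inv_le_log_of_pos hpos)
  rw [inv_div, le_sub_comm, div_le_iff₀ (by positivity)]
  linarith

lemma Real.log_one_add_mul_sq_lt {x : ℝ} (hx : 2 ≤ x) :
    log (1 + x) * (1 + x) ^ 2 < log (2 * x) * (2 * x ^ 2) := by
  have hsplit : log (2 * x / (1 + x)) = log (2 * x) - log (1 + x) :=
    log_div (by positivity) (by positivity)
  have hL : 0 ≤ log (2 * x) := log_nonneg (by linarith)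
  have hfirst : -log (2 * x) ≤ log (2 * x) * (x ^ 2 - 2 * x - 1) := by
    nlinarith [mul_nonneg hL (mul_nonneg (by linarith : (0 : ℝ) ≤ x) (by linarith : 0 ≤ x - 2))]
  have hsecond : (1 + x) ^ 2 / 4 ≤ log (2 * x / (1 + x)) * (1 + x) ^ 2 := by
    nlinarith [quarter_le_log_two_mul_div_one_add hx]
  have hgrowth : log (2 * x) < x / 2 + 1 := log_two_mul_lt_half_add_one (by linarith)
  calc log (1 + x) * (1 + x) ^ 2
      = log (2 * x) * (2 * x ^ 2) -
          (log (2 * x) * (x ^ 2 - 2 * x - 1) + log (2 * x / (1 + x)) * (1 + x) ^ 2) := by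
        rw [hsplit]; ring
    _ ≤ log (2 * x) * (2 * x ^ 2) - (-log (2 * x) + (1 + x) ^ 2 / 4) := by linarith
    _ < log (2 * x) * (2 * x ^ 2) := by nlinarith

theorem stmt_6 (r : ℝ) (hr : 1 ≤ r) :
    0 < Real.log (2 * 2 ^ r) * (2 * (2 ^ r : ℝ) ^ 2) -
        Real.log (1 + 2 ^ r) * (1 + (2 : ℝ) ^ r) ^ 2 :=
  sub_pos.mpr (log_one_add_mul_sq_lt (self_le_rpow_of_one_le one_le_two hr))
end

section
/- For every real r ≥ 1, the function f(x) = (1 - x)(1 + x^r)/(1 - x^{r+1}) is (weakly) decreasing on the open interval (0,1). -/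
open Set

/-- AM-GM step: `(r+1) x^2 ≤ (r-1) + 2 x^(r+1)`. -/
lemma amgm_step (r : ℝ) (hr : 1 ≤ r) {x : ℝ} (hx : 0 < x) :
    (r + 1) * x ^ 2 ≤ (r - 1) + 2 * x ^ (r + 1) := by
  have hr1 : (0:ℝ) < r + 1 := by linarith
  have hP : 0 ≤ x ^ (r + 1) := Real.rpow_nonneg hx.le _
  have h := Real.geom_mean_le_arith_mean2_weighted
    (div_nonneg (by linarith) hr1.le : (0:ℝ) ≤ (r - 1) / (r + 1))
    (div_nonneg (by norm_num) hr1.le : (0:ℝ) ≤ 2 / (r + 1))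
    (zero_le_one) hP (by field_simp; ring)
  have hL : (1:ℝ) ^ ((r - 1) / (r + 1)) * (x ^ (r + 1)) ^ (2 / (r + 1)) = x ^ 2 := by
    rw [Real.one_rpow, one_mul, ← Real.rpow_natCast x 2, ← Real.rpow_mul hx.le]
    congr 1
    push_cast
    field_simp
  rw [hL] at h
  have := mul_le_mul_of_nonneg_left h hr1.le
  have hne : r + 1 ≠ 0 := hr1.ne'
  calc (r + 1) * x ^ 2 ≤ (r + 1) * ((r - 1) / (r + 1) * 1 + 2 / (r + 1) * x ^ (r + 1)) := this
    _ = (r - 1) + 2 * x ^ (r + 1) := by field_simp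

/-- Key inequality: `r x^(r-1) (1 - x^2) ≤ 1 - x^(2r)` for `x ∈ (0,1)`. -/
lemma key_ineq (r : ℝ) (hr : 1 ≤ r) {x : ℝ} (hx : 0 < x) (hx1 : x < 1) :
    r * x ^ (r - 1) * (1 - x ^ 2) ≤ 1 - x ^ (2 * r) := by
  set H : ℝ → ℝ := fun y => 1 - y ^ (2 * r) + r * y ^ (r + 1) - r * y ^ (r - 1) with hHdef
  -- derivative of H at any y > 0
  have hderiv : ∀ y : ℝ, 0 < y →
      HasDerivAt H (-(2 * r * y ^ (2 * r - 1)) + r * ((r + 1) * y ^ r)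
        - r * ((r - 1) * y ^ (r - 2))) y := by
    intro y hy
    have h1 : HasDerivAt (fun z : ℝ => z ^ (2 * r)) (2 * r * y ^ (2 * r - 1)) y :=
      Real.hasDerivAt_rpow_const (Or.inl hy.ne')
    have h2 : HasDerivAt (fun z : ℝ => z ^ (r + 1)) ((r + 1) * y ^ r) y := by
      have := Real.hasDerivAt_rpow_const (p := r + 1) (x := y) (Or.inl hy.ne')
      simpa using this
    have h3 : HasDerivAt (fun z : ℝ => z ^ (r - 1)) ((r - 1) * y ^ (r - 2)) y := by
      have := Real.hasDerivAt_rpow_const (p := r - 1) (x := y) (Or.inl hy.ne')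
      have e : r - 1 - 1 = r - 2 := by ring
      rwa [e] at this
    exact ((h1.const_sub 1).add (h2.const_mul r)).sub (h3.const_mul r)
  -- H is antitone on Ioc 0 1
  have hanti : AntitoneOn H (Ioc (0:ℝ) 1) := by
    apply antitoneOn_of_deriv_nonpos (convex_Ioc 0 1)
    · intro y hy
      exact ((hderiv y hy.1).continuousAt).continuousWithinAt
    · intro y hy
      rw [interior_Ioc] at hy
      exact (hderiv y hy.1).differentiableAt.differentiableWithinAt
    · intro y hy
      rw [interior_Ioc] at hy
      obtain ⟨hy0, hy1⟩ := hy
      rw [(hderiv y hy0).deriv]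
      have e1 : y ^ (2 * r - 1) = y ^ (r + 1) * y ^ (r - 2) := by
        rw [← Real.rpow_add hy0]; congr 1; ring
      have e2 : y ^ r = y ^ 2 * y ^ (r - 2) := by
        rw [← Real.rpow_natCast y 2, ← Real.rpow_add hy0]
        congr 1; push_cast; ring
      rw [e1, e2]
      have hB : 0 ≤ y ^ (r - 2) := Real.rpow_nonneg hy0.le _
      have hAM := amgm_step r hr hy0
      have hr0 : 0 ≤ r := by linarith
      have expand : -(2 * r * (y ^ (r + 1) * y ^ (r - 2))) + r * ((r + 1) * (y ^ 2 * y ^ (r - 2)))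
          - r * ((r - 1) * y ^ (r - 2))
          = r * y ^ (r - 2) * ((r + 1) * y ^ 2 - ((r - 1) + 2 * y ^ (r + 1))) := by ring
      rw [expand]
      have : (r + 1) * y ^ 2 - ((r - 1) + 2 * y ^ (r + 1)) ≤ 0 := by linarith
      exact mul_nonpos_of_nonneg_of_nonpos (by positivity) this
  have hmem : x ∈ Ioc (0:ℝ) 1 := ⟨hx, hx1.le⟩
  have h1mem : (1:ℝ) ∈ Ioc (0:ℝ) 1 := ⟨one_pos, le_refl 1⟩
  have := hanti hmem h1mem hx1.le
  have hH1 : H 1 = 0 := by simp [hHdef]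
  rw [hH1] at this
  have hHx : H x = 1 - x ^ (2 * r) + r * x ^ (r + 1) - r * x ^ (r - 1) := rfl
  have e4 : x ^ (r + 1) = x ^ (r - 1) * x ^ 2 := by
    rw [← Real.rpow_natCast x 2, ← Real.rpow_add hx]
    congr 1; push_cast; ring
  rw [hHx, e4] at this
  nlinarith [this]

theorem stmt_8 (r : ℝ) (hr : 1 ≤ r) :
    AntitoneOn (fun x : ℝ => (1 - x) * (1 + x ^ r) / (1 - x ^ (r + 1)))
      (Set.Ioo (0 : ℝ) 1) := by
  set f : ℝ → ℝ := fun x => (1 - x) * (1 + x ^ r) / (1 - x ^ (r + 1)) with hfdef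
  have hD0 : ∀ x : ℝ, 0 < x → x < 1 → 1 - x ^ (r + 1) ≠ 0 := by
    intro x hx hx1
    have : x ^ (r + 1) < 1 := Real.rpow_lt_one hx.le hx1 (by linarith)
    linarith
  have hderiv : ∀ x : ℝ, 0 < x → x < 1 →
      HasDerivAt f ((((-1) * (1 + x ^ r) + (1 - x) * (r * x ^ (r - 1))) * (1 - x ^ (r + 1))
        - (1 - x) * (1 + x ^ r) * (-((r + 1) * x ^ r))) / (1 - x ^ (r + 1)) ^ 2) x := by
    intro x hx hx1
    have hxr : HasDerivAt (fun y : ℝ => y ^ r) (r * x ^ (r - 1)) x :=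
      Real.hasDerivAt_rpow_const (Or.inl hx.ne')
    have h1x : HasDerivAt (fun y : ℝ => 1 - y) (-1) x := by
      simpa using (hasDerivAt_id x).const_sub 1
    have hN : HasDerivAt (fun y : ℝ => (1 - y) * (1 + y ^ r))
        ((-1) * (1 + x ^ r) + (1 - x) * (r * x ^ (r - 1))) x := h1x.mul (hxr.const_add 1)
    have hDD : HasDerivAt (fun y : ℝ => 1 - y ^ (r + 1)) (-((r + 1) * x ^ r)) x := by
      have h := Real.hasDerivAt_rpow_const (p := r + 1) (x := x) (Or.inl hx.ne')
      have e : r + 1 - 1 = r := by ring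
      rw [e] at h
      exact h.const_sub 1
    exact hN.div hDD (hD0 x hx hx1)
  apply antitoneOn_of_deriv_nonpos (convex_Ioo 0 1)
  · intro x hx
    exact ((hderiv x hx.1 hx.2).continuousAt).continuousWithinAt
  · intro x hx
    rw [interior_Ioo] at hx
    exact (hderiv x hx.1 hx.2).differentiableAt.differentiableWithinAt
  · intro x hx
    rw [interior_Ioo] at hx
    obtain ⟨hx0, hx1⟩ := hx
    rw [(hderiv x hx0 hx1).deriv]
    apply div_nonpos_of_nonpos_of_nonneg _ (sq_nonneg _)
    -- rewrite everything in terms of A = x^(r-1)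
    have e3 : x ^ r = x ^ (r - 1) * x := by
      nth_rewrite 3 [← Real.rpow_one x]
      rw [← Real.rpow_add hx0]; congr 1; ring
    have e5 : x ^ (r + 1) = x ^ (r - 1) * (x * x) := by
      rw [show x * x = x ^ (2:ℕ) by ring, ← Real.rpow_natCast x 2, ← Real.rpow_add hx0]
      congr 1; push_cast; ring
    have hkey := key_ineq r hr hx0 hx1
    have e6 : x ^ (2 * r) = (x ^ (r - 1)) * (x ^ (r - 1)) * (x * x) := by
      rw [show x * x = x ^ (2:ℕ) by ring, ← Real.rpow_natCast x 2,
        ← Real.rpow_add hx0, ← Real.rpow_add hx0]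
      congr 1; push_cast; ring
    rw [e6] at hkey
    rw [e3, e5]
    nlinarith [hkey]
end

section
/- For every real r ≥ 1, the function g(x) = x^{2r} − r·x^{r+1} + r·x^{r-1} − 1 is increasing on (0,1) and satisfies g(1) = 0; consequently g(x) ≤ 0 for 0 < x < 1. -/
open Real Set

private lemma h_hasDeriv (r x : ℝ) (hx : x ≠ 0) :
    HasDerivAt (fun x : ℝ => 2 * x ^ (r + 1) - (r + 1) * x ^ (2:ℝ) + (r - 1))
      (2 * ((r+1) * x ^ r) - (r+1) * (2 * x)) x := by
  have h1 := (Real.hasDerivAt_rpow_const (x := x) (p := r + 1) (Or.inl hx)).const_mul 2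
  have h2 := (Real.hasDerivAt_rpow_const (x := x) (p := (2:ℝ)) (Or.inl hx)).const_mul (r + 1)
  have := (h1.sub h2).add_const (r - 1)
  simpa [show (2:ℝ) - 1 = 1 by norm_num, Real.rpow_one] using this

private lemma h_nonneg (r : ℝ) (hr : 1 ≤ r) {x : ℝ} (hx : 0 < x) (hx1 : x ≤ 1) :
    0 ≤ 2 * x ^ (r + 1) - (r + 1) * x ^ (2:ℝ) + (r - 1) := by
  have hanti : AntitoneOn (fun x : ℝ => 2 * x ^ (r + 1) - (r + 1) * x ^ (2:ℝ) + (r - 1))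
      (Set.Icc (0:ℝ) 1) := by
    apply antitoneOn_of_deriv_nonpos (convex_Icc 0 1)
    · intro y hy
      refine ContinuousWithinAt.add (ContinuousWithinAt.sub ?_ ?_) continuousWithinAt_const
      · exact (continuousAt_const.mul (Real.continuousAt_rpow_const y (r+1)
          (Or.inr (by linarith)))).continuousWithinAt
      · exact (continuousAt_const.mul (Real.continuousAt_rpow_const y (2:ℝ)
          (Or.inr (by norm_num)))).continuousWithinAt
    · intro y hy
      rw [interior_Icc] at hy
      exact (h_hasDeriv r y (ne_of_gt hy.1)).differentiableAt.differentiableWithinAt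
    · intro y hy
      rw [interior_Icc] at hy
      rw [(h_hasDeriv r y (ne_of_gt hy.1)).deriv]
      have hyr : y ^ r ≤ y ^ (1:ℝ) :=
        Real.rpow_le_rpow_of_exponent_ge hy.1 (le_of_lt hy.2) hr
      rw [Real.rpow_one] at hyr
      have hr1 : 0 ≤ r + 1 := by linarith
      nlinarith [mul_nonneg hr1 (sub_nonneg.2 hyr), Real.rpow_one y]
  have := hanti (Set.mem_Icc.2 ⟨le_of_lt hx, hx1⟩) (Set.mem_Icc.2 ⟨zero_le_one, le_rfl⟩) hx1
  simp only [Real.one_rpow] at this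
  linarith

private lemma g_hasDeriv (r x : ℝ) (hx : x ≠ 0) :
    HasDerivAt (fun x : ℝ => x ^ (2 * r) - r * x ^ (r + 1) + r * x ^ (r - 1) - 1)
      (2 * r * x ^ (2 * r - 1) - r * ((r+1) * x ^ r) + r * ((r-1) * x ^ (r - 1 - 1))) x := by
  have h1 := Real.hasDerivAt_rpow_const (x := x) (p := 2 * r) (Or.inl hx)
  have h2 := (Real.hasDerivAt_rpow_const (x := x) (p := r + 1) (Or.inl hx)).const_mul r
  have h3 := (Real.hasDerivAt_rpow_const (x := x) (p := r - 1) (Or.inl hx)).const_mul r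
  have := ((h1.sub h2).add h3).sub_const 1
  simpa [add_sub_cancel_right] using this

private lemma g_mono (r : ℝ) (hr : 1 ≤ r) :
    MonotoneOn (fun x : ℝ => x ^ (2 * r) - r * x ^ (r + 1) + r * x ^ (r - 1) - 1)
      (Set.Ioc (0 : ℝ) 1) := by
  apply monotoneOn_of_deriv_nonneg (convex_Ioc 0 1)
  · intro y hy
    exact (g_hasDeriv r y (ne_of_gt hy.1)).continuousAt.continuousWithinAt
  · intro y hy
    rw [interior_Ioc] at hy
    exact (g_hasDeriv r y (ne_of_gt hy.1)).differentiableAt.differentiableWithinAt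
  · intro y hy
    rw [interior_Ioc] at hy
    obtain ⟨hy0, hy1⟩ := hy
    rw [(g_hasDeriv r y (ne_of_gt hy0)).deriv]
    have key : 2 * r * y ^ (2 * r - 1) - r * ((r+1) * y ^ r) + r * ((r-1) * y ^ (r - 1 - 1))
        = r * y ^ (r - 2) * (2 * y ^ (r + 1) - (r + 1) * y ^ (2:ℝ) + (r - 1)) := by
      have e1 : y ^ (r - 2) * y ^ (r + 1) = y ^ (2 * r - 1) := by
        rw [← Real.rpow_add hy0]; ring_nf
      have e2 : y ^ (r - 2) * y ^ (2:ℝ) = y ^ r := by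
        rw [← Real.rpow_add hy0]; ring_nf
      have e3 : y ^ (r - 1 - 1) = y ^ (r - 2) := by ring_nf
      rw [e3, ← e1, ← e2]; ring
    rw [key]
    have h1 : 0 ≤ r * y ^ (r - 2) :=
      mul_nonneg (by linarith) (le_of_lt (Real.rpow_pos_of_pos hy0 _))
    exact mul_nonneg h1 (h_nonneg r hr hy0 (le_of_lt hy1))

theorem stmt_9 (r : ℝ) (hr : 1 ≤ r) :
    MonotoneOn (fun x : ℝ => x ^ (2 * r) - r * x ^ (r + 1) + r * x ^ (r - 1) - 1)
      (Set.Ioo (0 : ℝ) 1) ∧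
    ((1 : ℝ) ^ (2 * r) - r * (1 : ℝ) ^ (r + 1) + r * (1 : ℝ) ^ (r - 1) - 1 = 0) ∧
    ∀ x : ℝ, 0 < x → x < 1 →
      x ^ (2 * r) - r * x ^ (r + 1) + r * x ^ (r - 1) - 1 ≤ 0 := by
  refine ⟨(g_mono r hr).mono (fun x hx => ⟨hx.1, le_of_lt hx.2⟩), by simp [Real.one_rpow], ?_⟩
  intro x hx0 hx1
  have := g_mono r hr (Set.mem_Ioc.2 ⟨hx0, le_of_lt hx1⟩)
    (Set.mem_Ioc.2 ⟨zero_lt_one, le_rfl⟩) (le_of_lt hx1)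
  simp only [Real.one_rpow] at this
  linarith
end

section
/- For every integer n ≥ 1 and real r ≥ 1, ((n+1)^r + n^r)/((n+1)^{r+1} − n^{r+1}) ≥ ((n+2)^r + (n+1)^r)/((n+2)^{r+1} − (n+1)^{r+1}). -/
/-!
Both sides are reciprocals of values of
`φ x = ((x + 1) ^ (r + 1) - x ^ (r + 1)) / ((x + 1) ^ r + x ^ r)`, at `x = n + 1` and `x = n`, so it
suffices that `φ` is monotone on `[0, ∞)`. The numerator of `φ'(x)` equals `x ^ (2r) g((x + 1) / x)`
with `g t = t ^ (2r) - 1 - r t ^ (r + 1) + r t ^ (r - 1)`. Now `g 1 = 0` and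
`g' t = r t ^ (r - 2) h t` with `h t = 2 t ^ (r + 1) - (r + 1) t ^ 2 + (r - 1)`, while `h 1 = 0` and
`h' t = 2 (r + 1) t (t ^ (r - 1) - 1) ≥ 0` for `t ≥ 1`; hence `h ≥ 0`, `g ≥ 0` and `φ' ≥ 0`.
-/

open Real Set

lemma monotoneOn_Ici_of_hasDerivAt_nonneg {f f' : ℝ → ℝ} {a : ℝ} (hf : ContinuousOn f (Ici a))
    (hf' : ∀ x ∈ Ioi a, HasDerivAt f (f' x) x) (hf'₀ : ∀ x ∈ Ioi a, 0 ≤ f' x) :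
    MonotoneOn f (Ici a) :=
  monotoneOn_of_hasDerivWithinAt_nonneg (convex_Ici a) hf
    (by simpa only [interior_Ici] using fun x hx => (hf' x hx).hasDerivWithinAt)
    (by simpa only [interior_Ici] using hf'₀)

lemma mul_sq_le_two_mul_rpow_add {r t : ℝ} (hr : 1 ≤ r) (ht : 1 ≤ t) :
    (r + 1) * t ^ 2 ≤ 2 * t ^ (r + 1) + (r - 1) := by
  have hmono : MonotoneOn (fun t : ℝ => 2 * t ^ (r + 1) + (r - 1) - (r + 1) * t ^ 2) (Ici 1) := by
    refine monotoneOn_Ici_of_hasDerivAt_nonneg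
      (f' := fun t => 2 * ((r + 1) * t ^ r) - (r + 1) * (2 * t)) ?_ (fun t ht => ?_)
      (fun t ht => ?_)
    · have := continuous_rpow_const (by linarith : 0 ≤ r + 1)
      fun_prop
    · have hpow := hasDerivAt_rpow_const (x := t) (p := r + 1) (Or.inl (zero_lt_one.trans ht).ne')
      rw [add_sub_cancel_right] at hpow
      have hsq : HasDerivAt (fun t : ℝ => t ^ 2) (2 * t) t := by simpa using hasDerivAt_pow 2 t
      exact ((hpow.const_mul 2).add_const (r - 1)).sub (hsq.const_mul (r + 1))
    · have : t ≤ t ^ r := by simpa using rpow_le_rpow_of_exponent_le ht.le hr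
      nlinarith
  have := hmono self_mem_Ici ht ht
  simp only [one_rpow, one_pow] at this
  linarith

lemma mul_rpow_sub_mul_rpow_le_rpow_sub_one {r t : ℝ} (hr : 1 ≤ r) (ht : 1 ≤ t) :
    r * t ^ (r + 1) - r * t ^ (r - 1) ≤ t ^ (2 * r) - 1 := by
  have hmono : MonotoneOn (fun t : ℝ => t ^ (2 * r) - 1 - (r * t ^ (r + 1) - r * t ^ (r - 1)))
      (Ici 1) := by
    refine monotoneOn_Ici_of_hasDerivAt_nonneg (f' := fun t =>
      2 * r * t ^ (2 * r - 1) - (r * ((r + 1) * t ^ (r + 1 - 1)) - r * ((r - 1) * t ^ (r - 1 - 1))))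
      ?_ (fun t ht => ?_) (fun t ht => ?_)
    · have := continuous_rpow_const (by linarith : 0 ≤ 2 * r)
      have := continuous_rpow_const (by linarith : 0 ≤ r + 1)
      have := continuous_rpow_const (by linarith : 0 ≤ r - 1)
      fun_prop
    · have ht0 : t ≠ 0 := (zero_lt_one.trans ht).ne'
      exact ((hasDerivAt_rpow_const (Or.inl ht0)).sub_const 1).sub
        (((hasDerivAt_rpow_const (Or.inl ht0)).const_mul r).sub
          ((hasDerivAt_rpow_const (Or.inl ht0)).const_mul r))
    · have ht0 : 0 < t := zero_lt_one.trans ht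
      have factor : 2 * r * t ^ (2 * r - 1) -
          (r * ((r + 1) * t ^ (r + 1 - 1)) - r * ((r - 1) * t ^ (r - 1 - 1))) =
          r * t ^ (r - 2) * (2 * t ^ (r + 1) + (r - 1) - (r + 1) * t ^ 2) := by
        have e1 : t ^ (2 * r - 1) = t ^ (r - 2) * t ^ (r + 1) := by
          rw [← rpow_add ht0]; ring_nf
        have e2 : t ^ (r + 1 - 1) = t ^ (r - 2) * t ^ 2 := by
          rw [← rpow_natCast, ← rpow_add ht0]; ring_nf
        have e3 : t ^ (r - 1 - 1) = t ^ (r - 2) := by ring_nf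
        rw [e1, e2, e3]; ring
      rw [factor]
      have := mul_sq_le_two_mul_rpow_add hr ht.le
      have := rpow_pos_of_pos ht0 (r - 2)
      have : 0 ≤ r := by linarith
      positivity
  simpa using hmono self_mem_Ici ht ht

lemma mul_rpow_mul_rpow_sub_le_rpow_sub_rpow {r u v : ℝ} (hr : 1 ≤ r) (hv : 0 < v) (hvu : v ≤ u) :
    r * (u ^ (r + 1) * v ^ (r - 1) - u ^ (r - 1) * v ^ (r + 1)) ≤ u ^ (2 * r) - v ^ (2 * r) := by
  have hu : 0 ≤ u := hv.le.trans hvu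
  have key := mul_rpow_sub_mul_rpow_le_rpow_sub_one hr ((one_le_div hv).2 hvu)
  rw [div_rpow hu hv.le, div_rpow hu hv.le, div_rpow hu hv.le] at key
  have hv2 : v ^ (2 * r) = v ^ (r + 1) * v ^ (r - 1) := by rw [← rpow_add hv]; ring_nf
  have hp : 0 < v ^ (r + 1) := rpow_pos_of_pos hv _
  have hm : 0 < v ^ (r - 1) := rpow_pos_of_pos hv _
  rw [hv2] at key ⊢
  rw [← sub_nonneg] at key ⊢
  have : u ^ (2 * r) - v ^ (r + 1) * v ^ (r - 1) -
      r * (u ^ (r + 1) * v ^ (r - 1) - u ^ (r - 1) * v ^ (r + 1)) =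
      v ^ (r + 1) * v ^ (r - 1) * (u ^ (2 * r) / (v ^ (r + 1) * v ^ (r - 1)) - 1 -
        (r * (u ^ (r + 1) / v ^ (r + 1)) - r * (u ^ (r - 1) / v ^ (r - 1)))) := by
    field_simp
  rw [this]
  positivity

lemma monotoneOn_rpow_sub_rpow_div_rpow_add_rpow {r : ℝ} (hr : 1 ≤ r) :
    MonotoneOn (fun x : ℝ => ((x + 1) ^ (r + 1) - x ^ (r + 1)) / ((x + 1) ^ r + x ^ r))
      (Ici 0) := by
  refine monotoneOn_Ici_of_hasDerivAt_nonneg (f' := fun x =>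
    (((r + 1) * (x + 1) ^ r - (r + 1) * x ^ r) * ((x + 1) ^ r + x ^ r) -
      ((x + 1) ^ (r + 1) - x ^ (r + 1)) * (r * (x + 1) ^ (r - 1) + r * x ^ (r - 1))) /
      ((x + 1) ^ r + x ^ r) ^ 2) ?_ (fun x hx => ?_) (fun x hx => ?_)
  · have := continuous_rpow_const (by linarith : 0 ≤ r)
    have := continuous_rpow_const (by linarith : 0 ≤ r + 1)
    refine ContinuousOn.div (by fun_prop) (by fun_prop) fun x hx => ?_
    have : 0 < (x + 1) ^ r := rpow_pos_of_pos (by linarith [mem_Ici.1 hx]) r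
    have : 0 ≤ x ^ r := rpow_nonneg hx r
    positivity
  · have hv : 0 < x := hx
    have hu : 0 < x + 1 := by linarith
    have hshift : HasDerivAt (fun y : ℝ => y + 1) 1 x := (hasDerivAt_id x).add_const 1
    have du1 := (hshift.rpow_const (p := r + 1) (Or.inl hu.ne'))
    have dv1 := hasDerivAt_rpow_const (x := x) (p := r + 1) (Or.inl hv.ne')
    have du2 := (hshift.rpow_const (p := r) (Or.inl hu.ne'))
    have dv2 := hasDerivAt_rpow_const (x := x) (p := r) (Or.inl hv.ne')
    simp only [one_mul, add_sub_cancel_right] at du1 dv1 du2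
    exact (du1.sub dv1).div (du2.add dv2) (by positivity)
  · have hv : 0 < x := hx
    have hu : 0 < x + 1 := by linarith
    have hsq {y : ℝ} (hy : 0 < y) (a b : ℝ) (hab : a + b = 2 * r) : y ^ a * y ^ b = y ^ (2 * r) := by
      rw [← rpow_add hy, hab]
    have key := mul_rpow_mul_rpow_sub_le_rpow_sub_rpow hr hv (by linarith : x ≤ x + 1)
    refine div_nonneg ?_ (sq_nonneg _)
    linear_combination key - (r + 1) * hsq hu r r (by ring) + (r + 1) * hsq hv r r (by ring)
      + r * hsq hu (r + 1) (r - 1) (by ring) - r * hsq hv (r + 1) (r - 1) (by ring)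

theorem stmt_10_general (n : ℕ) (r : ℝ) (hr : 1 ≤ r) :
    ((n + 2 : ℝ) ^ r + (n + 1 : ℝ) ^ r) / ((n + 2 : ℝ) ^ (r + 1) - (n + 1 : ℝ) ^ (r + 1)) ≤
    ((n + 1 : ℝ) ^ r + (n : ℝ) ^ r) / ((n + 1 : ℝ) ^ (r + 1) - (n : ℝ) ^ (r + 1)) := by
  have hn : (0 : ℝ) ≤ n := n.cast_nonneg
  have hpos : 0 < ((n + 1 : ℝ) ^ (r + 1) - (n : ℝ) ^ (r + 1)) / ((n + 1 : ℝ) ^ r + (n : ℝ) ^ r) :=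
    div_pos (sub_pos.2 (rpow_lt_rpow hn (by linarith) (by linarith)))
      (add_pos_of_pos_of_nonneg (rpow_pos_of_pos (by linarith) r) (rpow_nonneg hn r))
  have hmono := monotoneOn_rpow_sub_rpow_div_rpow_add_rpow hr hn (by positivity : (0 : ℝ) ≤ n + 1)
    (by linarith : (n : ℝ) ≤ n + 1)
  beta_reduce at hmono
  rw [show (n : ℝ) + 1 + 1 = n + 2 by ring] at hmono
  simpa only [inv_div] using inv_anti₀ hpos hmono

theorem stmt_10 (n : ℕ) (hn : 1 ≤ n) (r : ℝ) (hr : 1 ≤ r) :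
    ((n + 2 : ℝ) ^ r + (n + 1 : ℝ) ^ r) / ((n + 2 : ℝ) ^ (r + 1) - (n + 1 : ℝ) ^ (r + 1)) ≤
    ((n + 1 : ℝ) ^ r + (n : ℝ) ^ r) / ((n + 1 : ℝ) ^ (r + 1) - (n : ℝ) ^ (r + 1)) :=
  stmt_10_general n r hr
end

section
/- For every integer n ≥ 1 and real r ≥ 1, (Σ_{i=1}^{n+1} i^r + Σ_{i=1}^{n} i^r)/(n+1)^{r+1} ≥ (Σ_{i=1}^{n+2} i^r + Σ_{i=1}^{n+1} i^r)/(n+2)^{r+1}. -/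
/-!
With `a j = j ^ r + (j + 1) ^ r` and `b j = (j + 1) ^ (r + 1) - j ^ (r + 1)`, the two sides are
`∑_{j<m+1} a j / ∑_{j<m+1} b j` for `m = n + 1` and `m = n`, because `b` telescopes.
Such a ratio of partial sums decreases in `m` as soon as `b j / a j` increases in `j`, and
`b j / a j` is the restriction of `x ↦ ((x + 1) ^ (r + 1) - x ^ (r + 1)) / (x ^ r + (x + 1) ^ r)`.
With `v = (x + 1) / x`, the sign of its derivative is that of `v ^ r - v ^ (-r) - r (v - v⁻¹)`,
which vanishes at `v = 1` and has derivative `r (v ^ (r - 1) - 1) (1 - v ^ (-r - 1)) ≥ 0`.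
-/

open Finset Set Real

theorem sum_range_succ_mul_sum_range_le {R : Type*} [CommSemiring R] [PartialOrder R]
    [IsOrderedAddMonoid R] {a b : ℕ → R} {m : ℕ} (h : ∀ j < m, b j * a m ≤ b m * a j) :
    (∑ j ∈ range (m + 1), a j) * ∑ j ∈ range m, b j ≤
      (∑ j ∈ range m, a j) * ∑ j ∈ range (m + 1), b j := by
  rw [sum_range_succ, sum_range_succ, add_mul, mul_add]
  refine add_le_add le_rfl ?_
  rw [mul_sum, sum_mul]
  refine sum_le_sum fun j hj => ?_
  rw [mul_comm, mul_comm _ (b m)]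
  exact h j (Finset.mem_range.mp hj)

theorem sum_Icc_one_eq_sum_range {M : Type*} [AddCommMonoid M] (f : ℕ → M) (m : ℕ) :
    ∑ i ∈ Icc 1 m, f i = ∑ j ∈ range m, f (j + 1) := by
  rw [← Finset.Ico_add_one_right_eq_Icc, sum_Ico_eq_sum_range]
  simp [add_comm]

theorem sum_range_rpow_add_succ_rpow {p : ℝ} (hp : p ≠ 0) (m : ℕ) :
    ∑ j ∈ range (m + 1), ((j : ℝ) ^ p + ((j : ℝ) + 1) ^ p) =
      ∑ i ∈ Icc 1 (m + 1), (i : ℝ) ^ p + ∑ i ∈ Icc 1 m, (i : ℝ) ^ p := by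
  rw [sum_add_distrib, add_comm, sum_Icc_one_eq_sum_range, sum_Icc_one_eq_sum_range,
    sum_range_succ' (fun j : ℕ => (j : ℝ) ^ p)]
  simp [zero_rpow hp]

theorem sum_range_succ_rpow_sub_rpow {p : ℝ} (hp : p ≠ 0) (m : ℕ) :
    ∑ j ∈ range m, (((j : ℝ) + 1) ^ p - (j : ℝ) ^ p) = (m : ℝ) ^ p := by
  simpa [zero_rpow hp] using sum_range_sub (fun j : ℕ => (j : ℝ) ^ p) m

theorem mul_sub_inv_le_rpow_sub_rpow_neg {r v : ℝ} (hr : 1 ≤ r) (hv : 1 ≤ v) :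
    r * (v - v⁻¹) ≤ v ^ r - v ^ (-r) := by
  let g : ℝ → ℝ := fun v => v ^ r - v ^ (-r) - r * (v - v⁻¹)
  have hg' : ∀ v, 0 < v → HasDerivAt g (r * (v ^ (r - 1) - 1) * (1 - v ^ (-r - 1))) v := by
    intro v hv
    have hprod : v ^ (r - 1) * v ^ (-r - 1) = (v ^ 2)⁻¹ := by
      rw [← rpow_add hv, ← rpow_natCast, ← rpow_neg hv.le]
      ring_nf
    refine (((hasDerivAt_rpow_const (p := r) (Or.inl hv.ne')).sub
      (hasDerivAt_rpow_const (p := -r) (Or.inl hv.ne'))).sub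
      (((hasDerivAt_id v).sub (hasDerivAt_inv hv.ne')).const_mul r)).congr_deriv ?_
    linear_combination r * hprod
  have hmono : MonotoneOn g (Ici 1) := by
    refine monotoneOn_of_hasDerivWithinAt_nonneg (convex_Ici 1)
      (fun v hv => (hg' v (by linarith [mem_Ici.mp hv])).continuousAt.continuousWithinAt)
      (fun v hv => (hg' v ?_).hasDerivWithinAt) fun v hv => ?_
    all_goals rw [interior_Ici] at hv
    · linarith [Set.mem_Ioi.mp hv]
    · have hv1 : 1 ≤ v := (Set.mem_Ioi.mp hv).le
      have h1 : 0 ≤ v ^ (r - 1) - 1 := sub_nonneg.2 (one_le_rpow hv1 (by linarith))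
      have h2 : 0 ≤ 1 - v ^ (-r - 1) :=
        sub_nonneg.2 (rpow_le_one_of_one_le_of_nonpos hv1 (by linarith))
      have : 0 ≤ r := by linarith
      positivity
  simpa [g] using hmono self_mem_Ici hv hv

theorem mul_rpow_sub_one_mul_le_rpow_sq_sub_rpow_sq {r x : ℝ} (hr : 1 ≤ r) (hx : 0 < x) :
    r * (x ^ (r - 1) * (x + 1) ^ (r - 1)) * ((x + 1) ^ 2 - x ^ 2) ≤
      ((x + 1) ^ r) ^ 2 - (x ^ r) ^ 2 := by
  have hx1 : 0 < x + 1 := by linarith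
  have hv : 1 ≤ (x + 1) / x := by rw [le_div_iff₀ hx]; linarith
  have hcore := mul_sub_inv_le_rpow_sub_rpow_neg hr hv
  rw [rpow_neg (by positivity), div_rpow hx1.le hx.le] at hcore
  simp only [inv_div] at hcore
  rw [rpow_sub_one hx.ne', rpow_sub_one hx1.ne']
  have hA : 0 < x ^ r := by positivity
  have hB : 0 < (x + 1) ^ r := by positivity
  generalize x ^ r = A at *
  generalize (x + 1) ^ r = B at *
  calc r * (A / x * (B / (x + 1))) * ((x + 1) ^ 2 - x ^ 2)
      = r * ((x + 1) / x - x / (x + 1)) * (A * B) := by field_simp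
    _ ≤ (B / A - A / B) * (A * B) := by gcongr
    _ = B ^ 2 - A ^ 2 := by field_simp

theorem monotoneOn_rpow_succ_sub_div_rpow_add {r : ℝ} (hr : 1 ≤ r) :
    MonotoneOn (fun x : ℝ => ((x + 1) ^ (r + 1) - x ^ (r + 1)) / (x ^ r + (x + 1) ^ r))
      (Ici 0) := by
  have hf' : ∀ x, 0 ≤ x →
      HasDerivAt (fun x : ℝ => ((x + 1) ^ (r + 1) - x ^ (r + 1)) / (x ^ r + (x + 1) ^ r))
        (((r + 1) * ((x + 1) ^ r - x ^ r) * (x ^ r + (x + 1) ^ r) -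
          ((x + 1) ^ (r + 1) - x ^ (r + 1)) * (r * (x ^ (r - 1) + (x + 1) ^ (r - 1)))) /
          (x ^ r + (x + 1) ^ r) ^ 2) x := by
    intro x hx
    have hshift := (hasDerivAt_id' x).add_const 1
    have hr1 : 1 ≤ r + 1 := by linarith
    have hN := (hshift.rpow_const (Or.inr hr1)).fun_sub
      ((hasDerivAt_id' x).rpow_const (Or.inr hr1))
    have hD := ((hasDerivAt_id' x).rpow_const (Or.inr hr)).fun_add
      (hshift.rpow_const (Or.inr hr))
    refine (hN.fun_div hD (by positivity)).congr_deriv ?_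
    rw [add_sub_cancel_right]
    ring
  refine monotoneOn_of_hasDerivWithinAt_nonneg (convex_Ici 0)
    (fun x hx => (hf' x hx).continuousAt.continuousWithinAt)
    (fun x hx => (hf' x (interior_subset hx)).hasDerivWithinAt) fun x hx => ?_
  rw [interior_Ici, Set.mem_Ioi] at hx
  have hx1 : 0 < x + 1 := by linarith
  have key := mul_rpow_sub_one_mul_le_rpow_sq_sub_rpow_sq hr hx
  rw [rpow_add_one hx.ne', rpow_add_one hx1.ne']
  rw [rpow_sub_one hx.ne', rpow_sub_one hx1.ne'] at key ⊢
  have hA : 0 < x ^ r := by positivity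
  have hB : 0 < (x + 1) ^ r := by positivity
  generalize x ^ r = A at hA key ⊢
  generalize (x + 1) ^ r = B at hB key ⊢
  apply div_nonneg _ (sq_nonneg _)
  field_simp at key ⊢
  linear_combination key

theorem stmt_11_general (n : ℕ) (r : ℝ) (hr : 1 ≤ r) :
    ((∑ i ∈ Finset.Icc 1 (n + 2), (i : ℝ) ^ r) + ∑ i ∈ Finset.Icc 1 (n + 1), (i : ℝ) ^ r) /
        (n + 2 : ℝ) ^ (r + 1) ≤
    ((∑ i ∈ Finset.Icc 1 (n + 1), (i : ℝ) ^ r) + ∑ i ∈ Finset.Icc 1 n, (i : ℝ) ^ r) /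
        (n + 1 : ℝ) ^ (r + 1) := by
  have hr0 : r ≠ 0 := by positivity
  have hr1 : r + 1 ≠ 0 := by positivity
  have hcross := sum_range_succ_mul_sum_range_le (m := n + 1)
    (a := fun j : ℕ => (j : ℝ) ^ r + ((j : ℝ) + 1) ^ r)
    (b := fun j : ℕ => ((j : ℝ) + 1) ^ (r + 1) - (j : ℝ) ^ (r + 1)) fun j hj => by
      have hmono := monotoneOn_rpow_succ_sub_div_rpow_add hr (mem_Ici.2 (Nat.cast_nonneg' j))
        (mem_Ici.2 (Nat.cast_nonneg' (n + 1))) (Nat.cast_le.2 hj.le)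
      rwa [div_le_div_iff₀ (by positivity) (by positivity)] at hmono
  rw [sum_range_rpow_add_succ_rpow hr0, sum_range_rpow_add_succ_rpow hr0,
    sum_range_succ_rpow_sub_rpow hr1, sum_range_succ_rpow_sub_rpow hr1] at hcross
  rw [div_le_div_iff₀ (by positivity) (by positivity)]
  push_cast at hcross
  simp only [add_assoc, one_add_one_eq_two] at hcross
  exact hcross

theorem stmt_11 (n : ℕ) (hn : 1 ≤ n) (r : ℝ) (hr : 1 ≤ r) :
    ((∑ i ∈ Finset.Icc 1 (n + 2), (i : ℝ) ^ r) + ∑ i ∈ Finset.Icc 1 (n + 1), (i : ℝ) ^ r) /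
        (n + 2 : ℝ) ^ (r + 1) ≤
    ((∑ i ∈ Finset.Icc 1 (n + 1), (i : ℝ) ^ r) + ∑ i ∈ Finset.Icc 1 n, (i : ℝ) ^ r) /
        (n + 1 : ℝ) ^ (r + 1) :=
  stmt_11_general n r hr
end

section
/- For all real r ≥ 1 and α ≥ 2, the sequence n ↦ (Σ_{i=1}^{n} i^r)^α / Σ_{i=1}^{n} i^{α(r+1)-1} is (weakly) decreasing in n for n ≥ 1. -/
/-!
Write `S n = ∑_{i=1}^n i^r` and `s = α (r + 1) - 1`. The numerator `S n ^ α` and the denominator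
are the partial sums of `S (j+1) ^ α - S j ^ α` and of `(j+1) ^ s`, and a ratio of partial sums is
nonincreasing as soon as the ratio `d j` of their terms is. After dividing `S j` by `(j+1)^(r+1)`,
`d j` is the secant slope of `x ↦ x ^ α` over an interval of length `1 / (j+1)` whose midpoint is
`(S j + S (j+1)) / (2 (j+1)^(r+1))`. Such a slope is `α` times the mean of the convex function
`x ^ (α-1)` along the interval, so it grows with the length and with the midpoint. The lengths
decrease, and so do the midpoints, by the same ratio-of-partial-sums principle: the terms are now
`(i^r + (i-1)^r) / 2` against `(i^(r+1) - (i-1)^(r+1)) / (r+1)`, the trapezoid rule against the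
exact integral of `t ^ r` over `[i-1, i]`, and their ratio decreases in `i`. For `r ≤ 2` this holds
because the trapezoid error decreases (`t ^ (r-1)` is concave); for `r ≥ 2` it follows from
Bernoulli's inequality and the midpoint bound for the convex function `t ^ (r-1)`.
-/

open Set MeasureTheory

theorem antitone_sum_range_div_sum_range {a b : ℕ → ℝ} (hb : ∀ i, 0 < b i)
    (hab : Antitone fun i => a i / b i) :
    Antitone fun n =>
      (∑ i ∈ Finset.range (n + 1), a i) / ∑ i ∈ Finset.range (n + 1), b i := by
  refine antitone_nat_of_succ_le fun n => ?_
  have hB : ∀ m, 0 < ∑ i ∈ Finset.range (m + 1), b i := fun m =>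
    Finset.sum_pos (fun i _ => hb i) Finset.nonempty_range_add_one
  have key : a (n + 1) * ∑ i ∈ Finset.range (n + 1), b i ≤
      (∑ i ∈ Finset.range (n + 1), a i) * b (n + 1) := by
    rw [Finset.mul_sum, Finset.sum_mul]
    refine Finset.sum_le_sum fun i hi => ?_
    have := hab (show i ≤ n + 1 by rw [Finset.mem_range] at hi; omega)
    rwa [div_le_div_iff₀ (hb _) (hb _)] at this
  rw [div_le_div_iff₀ (hB _) (hB _), Finset.sum_range_succ a (n + 1),
    Finset.sum_range_succ b (n + 1)]
  linarith

theorem ConvexOn.integral_le_trapezoid {f : ℝ → ℝ} {a b : ℝ} (hab : a ≤ b)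
    (hf : ConvexOn ℝ (Icc a b) f) (hfi : IntervalIntegrable f volume a b) :
    ∫ x in a..b, f x ≤ (b - a) * (f a + f b) / 2 := by
  rcases hab.eq_or_lt with rfl | hab
  · simp
  have hba : 0 < b - a := sub_pos.2 hab
  have hchord : ∀ x ∈ Icc a b, f x ≤ f a + (x - a) * ((f b - f a) / (b - a)) := by
    intro x hx
    have h := hf.2 (left_mem_Icc.2 hab.le) (right_mem_Icc.2 hab.le)
      (div_nonneg (sub_nonneg.2 hx.2) hba.le) (div_nonneg (sub_nonneg.2 hx.1) hba.le)
      (by field_simp; ring)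
    simp only [smul_eq_mul] at h
    rw [show (b - x) / (b - a) * a + (x - a) / (b - a) * b = x by field_simp; ring] at h
    refine h.trans_eq ?_
    field_simp
    ring
  calc ∫ x in a..b, f x ≤ ∫ x in a..b, (f a + (x - a) * ((f b - f a) / (b - a))) :=
        intervalIntegral.integral_mono_on hab.le hfi
          (Continuous.intervalIntegrable (by fun_prop) _ _) hchord
    _ = (b - a) * (f a + f b) / 2 := by
        rw [intervalIntegral.integral_add intervalIntegrable_const
          (Continuous.intervalIntegrable (by fun_prop) _ _), intervalIntegral.integral_mul_const,
          intervalIntegral.integral_comp_sub_right (fun x => x)]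
        simp only [intervalIntegral.integral_const, smul_eq_mul, sub_self, integral_id]
        field_simp
        ring

theorem ConcaveOn.trapezoid_le_integral {f : ℝ → ℝ} {a b : ℝ} (hab : a ≤ b)
    (hf : ConcaveOn ℝ (Icc a b) f) (hfi : IntervalIntegrable f volume a b) :
    (b - a) * (f a + f b) / 2 ≤ ∫ x in a..b, f x := by
  have := hf.neg.integral_le_trapezoid hab hfi.neg
  simp only [Pi.neg_apply, intervalIntegral.integral_neg] at this
  linarith

theorem ConvexOn.mul_midpoint_le_integral {f : ℝ → ℝ} {a b : ℝ} (hab : a ≤ b)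
    (hf : ConvexOn ℝ (Icc a b) f) (hfi : IntervalIntegrable f volume a b) :
    (b - a) * f ((a + b) / 2) ≤ ∫ x in a..b, f x := by
  have hrefl : IntervalIntegrable (fun x => f (a + b - x)) volume a b := by
    simpa using (hfi.comp_sub_left (a + b)).symm
  have hpt : ∀ x ∈ Icc a b, f ((a + b) / 2) ≤ (f x + f (a + b - x)) / 2 := by
    intro x hx
    have h := hf.2 (y := a + b - x) hx ⟨by linarith [hx.2], by linarith [hx.1]⟩
      (by norm_num : (0 : ℝ) ≤ 1 / 2) (by norm_num : (0 : ℝ) ≤ 1 / 2) (by norm_num)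
    simp only [smul_eq_mul] at h
    rw [show 1 / 2 * x + 1 / 2 * (a + b - x) = (a + b) / 2 by ring] at h
    linarith
  calc (b - a) * f ((a + b) / 2) = ∫ _ in a..b, f ((a + b) / 2) := by simp
    _ ≤ ∫ x in a..b, (f x + f (a + b - x)) / 2 :=
        intervalIntegral.integral_mono_on hab intervalIntegrable_const
          ((hfi.add hrefl).div_const 2) hpt
    _ = ∫ x in a..b, f x := by
        rw [intervalIntegral.integral_div, intervalIntegral.integral_add hfi hrefl,
          intervalIntegral.integral_comp_sub_left f (a + b)]
        simp only [add_sub_cancel_left, add_sub_cancel_right]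
        ring

theorem rpow_trapezoid_le_sub {p a b : ℝ} (hp0 : 0 ≤ p) (hp1 : p ≤ 1) (ha : 0 ≤ a)
    (hab : a ≤ b) :
    (p + 1) * (b - a) * (a ^ p + b ^ p) / 2 ≤ b ^ (p + 1) - a ^ (p + 1) := by
  have h := ((Real.concaveOn_rpow hp0 hp1).subset (Icc_subset_Ici_iff hab |>.2 ha)
    (convex_Icc a b)).trapezoid_le_integral hab
    (intervalIntegral.intervalIntegrable_rpow' (by linarith))
  rw [integral_rpow (Or.inl (by linarith)), le_div_iff₀ (by linarith)] at h
  linarith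

theorem sub_le_rpow_trapezoid {p a b : ℝ} (hp : 1 ≤ p) (ha : 0 ≤ a) (hab : a ≤ b) :
    b ^ (p + 1) - a ^ (p + 1) ≤ (p + 1) * (b - a) * (a ^ p + b ^ p) / 2 := by
  have h := ((convexOn_rpow hp).subset (Icc_subset_Ici_iff hab |>.2 ha)
    (convex_Icc a b)).integral_le_trapezoid hab
    (intervalIntegral.intervalIntegrable_rpow' (by linarith))
  rw [integral_rpow (Or.inl (by linarith)), div_le_iff₀ (by linarith)] at h
  linarith

theorem rpow_trapezoid_error_succ_le {r c : ℝ} (hr : 1 ≤ r) (hr2 : r ≤ 2) (hc : 1 ≤ c) :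
    ((c + 1) ^ r + c ^ r) / 2 - ((c + 1) ^ (r + 1) - c ^ (r + 1)) / (r + 1) ≤
      (c ^ r + (c - 1) ^ r) / 2 - (c ^ (r + 1) - (c - 1) ^ (r + 1)) / (r + 1) := by
  set E : ℝ → ℝ := fun x =>
    (x ^ r + (x - 1) ^ r) / 2 - (x ^ (r + 1) - (x - 1) ^ (r + 1)) / (r + 1)
  have hE' : ∀ x, HasDerivAt E
      (r * (x ^ (r - 1) + (x - 1) ^ (r - 1)) / 2 - (x ^ r - (x - 1) ^ r)) x := by
    intro x
    have h1 := (hasDerivAt_id' x).rpow_const (p := r) (Or.inr hr)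
    have h2 := ((hasDerivAt_id' x).sub_const 1).rpow_const (p := r) (Or.inr hr)
    have h3 := (hasDerivAt_id' x).rpow_const (p := r + 1) (Or.inr (by linarith))
    have h4 := ((hasDerivAt_id' x).sub_const 1).rpow_const (p := r + 1) (Or.inr (by linarith))
    refine (((h1.add h2).div_const 2).sub ((h3.sub h4).div_const (r + 1))).congr_deriv ?_
    simp only [add_sub_cancel_right]
    field_simp
  -- `E' x` is the trapezoid rule minus the integral of the concave `r t ^ (r - 1)` on `[x - 1, x]`
  have hanti : AntitoneOn E (Ici 1) := by
    refine antitoneOn_of_deriv_nonpos (convex_Ici 1)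
      (fun x _ => (hE' x).continuousAt.continuousWithinAt)
      (fun x _ => (hE' x).differentiableAt.differentiableWithinAt) fun x hx => ?_
    rw [interior_Ici, mem_Ioi] at hx
    have h := rpow_trapezoid_le_sub (p := r - 1) (a := x - 1) (b := x) (by linarith) (by linarith)
      (by linarith) (by linarith)
    rw [(hE' x).deriv]
    simp only [sub_add_cancel, sub_sub_cancel, mul_one] at h
    linarith
  have h := hanti (mem_Ici.2 hc) (mem_Ici.2 (by linarith : (1 : ℝ) ≤ c + 1)) (by linarith)
  simpa [E] using h

theorem rpow_trapezoid_ratio_succ_le_of_le_two {r c : ℝ} (hr : 1 ≤ r) (hr2 : r ≤ 2)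
    (hc : 1 ≤ c) :
    ((c + 1) ^ r + c ^ r) * (c ^ (r + 1) - (c - 1) ^ (r + 1)) ≤
      (c ^ r + (c - 1) ^ r) * ((c + 1) ^ (r + 1) - c ^ (r + 1)) := by
  have hr1 : 0 < r + 1 := by linarith
  have hE := rpow_trapezoid_error_succ_le hr hr2 hc
  set I₁ := (c ^ (r + 1) - (c - 1) ^ (r + 1)) / (r + 1) with hI₁
  set I₂ := ((c + 1) ^ (r + 1) - c ^ (r + 1)) / (r + 1) with hI₂
  have hI₁_nonneg : 0 ≤ I₁ := div_nonneg (sub_nonneg.2 (Real.rpow_le_rpow (by linarith)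
    (by linarith) hr1.le)) hr1.le
  have hI : I₁ ≤ I₂ := by
    have h := (convexOn_rpow (by linarith : 1 ≤ r + 1)).slope_mono_adjacent
      (x := c - 1) (y := c) (z := c + 1) (mem_Ici.2 (by linarith)) (mem_Ici.2 (by linarith))
      (by linarith) (by linarith)
    simp only [sub_sub_cancel, add_sub_cancel_left, div_one] at h
    exact div_le_div_of_nonneg_right h hr1.le
  have hE₂ : 0 ≤ ((c + 1) ^ r + c ^ r) / 2 - I₂ := by
    have h := sub_le_rpow_trapezoid hr (by linarith : 0 ≤ c) (by linarith : c ≤ c + 1)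
    rw [sub_nonneg, hI₂, div_le_div_iff₀ hr1 two_pos]
    nlinarith
  -- each trapezoid value is its integral `Iₖ` plus its error `Eₖ`; combine `E₂ ≤ E₁`, `0 ≤ E₂`
  -- and `I₁ ≤ I₂`
  rw [show c ^ (r + 1) - (c - 1) ^ (r + 1) = (r + 1) * I₁ by rw [hI₁]; field_simp,
    show (c + 1) ^ (r + 1) - c ^ (r + 1) = (r + 1) * I₂ by rw [hI₂]; field_simp]
  nlinarith [mul_le_mul_of_nonneg_left hI hE₂,
    mul_le_mul_of_nonneg_right hE (hI₁_nonneg.trans hI)]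

theorem rpow_trapezoid_ratio_succ_le_of_two_le {r c : ℝ} (hr : 2 ≤ r) (hc : 1 ≤ c) :
    ((c + 1) ^ r + c ^ r) * (c ^ (r + 1) - (c - 1) ^ (r + 1)) ≤
      (c ^ r + (c - 1) ^ r) * ((c + 1) ^ (r + 1) - c ^ (r + 1)) := by
  have hc0 : 0 < c := by linarith
  -- with `A = (c+1)^r`, `B = (c-1)^r`, `C = c^r` the claim reads `2c (C² - AB) ≤ C (A - B)`
  have hdiff : 2 * r * c ^ r ≤ c * ((c + 1) ^ r - (c - 1) ^ r) := by
    have h := ((convexOn_rpow (by linarith : 1 ≤ r - 1)).subset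
      (Icc_subset_Ici_iff (by linarith) |>.2 (by linarith : (0 : ℝ) ≤ c - 1))
      (convex_Icc _ _)).mul_midpoint_le_integral (a := c - 1) (b := c + 1) (by linarith)
      (intervalIntegral.intervalIntegrable_rpow' (by linarith))
    rw [integral_rpow (Or.inl (by linarith)), sub_add_cancel r 1,
      show (c - 1 + (c + 1)) / 2 = c by ring, show c + 1 - (c - 1) = 2 by ring,
      Real.rpow_sub_one hc0.ne', le_div_iff₀ (by linarith)] at h
    rw [mul_div_assoc', div_mul_eq_mul_div, div_le_iff₀ hc0] at h
    linarith
  have hprod : (c ^ r) ^ 2 * (c ^ 2 - r) ≤ c ^ 2 * ((c + 1) ^ r * (c - 1) ^ r) := by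
    have hc2 : 0 < c ^ 2 := by positivity
    have h := one_add_mul_self_le_rpow_one_add (s := -(1 / c ^ 2))
      (by rw [neg_le_neg_iff, div_le_one hc2]; nlinarith) (by linarith : 1 ≤ r)
    have e : (c ^ 2) ^ r * (1 + -(1 / c ^ 2)) ^ r = (c + 1) ^ r * (c - 1) ^ r := by
      rw [← Real.mul_rpow hc2.le
          (by rw [← sub_eq_add_neg, sub_nonneg, div_le_one hc2]; nlinarith),
        ← Real.mul_rpow (by linarith) (by linarith)]
      congr 1
      field_simp
      ring
    rw [Real.rpow_pow_comm hc0.le, ← e]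
    have := mul_le_mul_of_nonneg_left h (by positivity : 0 ≤ c ^ 2 * (c ^ 2) ^ r)
    field_simp at this ⊢
    linarith
  rw [Real.rpow_add_one' (by linarith) (by linarith),
    Real.rpow_add_one' (by linarith) (by linarith), Real.rpow_add_one' (by linarith) (by linarith)]
  have hC : 0 ≤ c ^ r := by positivity
  nlinarith [mul_le_mul_of_nonneg_left hdiff hC]

theorem rpow_trapezoid_ratio_succ_le {r c : ℝ} (hr : 1 ≤ r) (hc : 1 ≤ c) :
    ((c + 1) ^ r + c ^ r) * (c ^ (r + 1) - (c - 1) ^ (r + 1)) ≤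
      (c ^ r + (c - 1) ^ r) * ((c + 1) ^ (r + 1) - c ^ (r + 1)) :=
  (le_total r 2).elim (rpow_trapezoid_ratio_succ_le_of_le_two hr · hc)
    (rpow_trapezoid_ratio_succ_le_of_two_le · hc)

theorem rpow_tangent_le {β x y : ℝ} (hβ : 1 ≤ β) (hx : 0 ≤ x) (hy : 0 < y) :
    y ^ β + β * y ^ (β - 1) * (x - y) ≤ x ^ β := by
  have h := one_add_mul_self_le_rpow_one_add
    (by linarith [div_nonneg hx hy.le] : -1 ≤ x / y - 1) hβ
  rw [add_sub_cancel, Real.div_rpow hx hy.le, le_div_iff₀ (Real.rpow_pos_of_pos hy β)] at h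
  calc y ^ β + β * y ^ (β - 1) * (x - y)
      = (1 + β * (x / y - 1)) * y ^ β := by rw [Real.rpow_sub_one hy.ne']; field_simp
    _ ≤ x ^ β := h

theorem rpow_add_sub_rpow_div_eq_integral {α u a : ℝ} (hα : 0 < α) (ha : a ≠ 0) :
    ((u + a) ^ α - u ^ α) / a = α * ∫ t in (0 : ℝ)..1, (u + a * t) ^ (α - 1) := by
  rw [intervalIntegral.integral_comp_add_mul (fun x => x ^ (α - 1)) ha u,
    integral_rpow (Or.inl (by linarith)), sub_add_cancel]
  simp only [mul_one, mul_zero, add_zero, smul_eq_mul]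
  field_simp

theorem integral_rpow_affine_le_of_slope_le {β μ v w : ℝ} (hβ : 1 ≤ β) (hv : 0 ≤ v)
    (hvw : v ≤ w) (hμv : v / 2 < μ) (hμw : w / 2 ≤ μ) :
    ∫ t in (0 : ℝ)..1, (μ + v * (t - 1 / 2)) ^ β ≤
      ∫ t in (0 : ℝ)..1, (μ + w * (t - 1 / 2)) ^ β := by
  have hcont : ∀ s : ℝ, Continuous fun t : ℝ => (μ + s * (t - 1 / 2)) ^ β := fun s =>
    (by fun_prop : Continuous fun t : ℝ => μ + s * (t - 1 / 2)).rpow_const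
      fun _ => Or.inr (by linarith)
  -- both affine functions equal `μ` at `t = 1/2` and their difference changes sign there, so the
  -- tangent-line bound can use the slope at `μ`; the correction term integrates to `0`
  have hpt : ∀ t ∈ Icc (0 : ℝ) 1, (μ + v * (t - 1 / 2)) ^ β +
      β * μ ^ (β - 1) * ((w - v) * (t - 1 / 2)) ≤ (μ + w * (t - 1 / 2)) ^ β := by
    intro t ht
    have hy : 0 < μ + v * (t - 1 / 2) := by nlinarith [ht.1]
    have htan := rpow_tangent_le hβ (by nlinarith [ht.1] : 0 ≤ μ + w * (t - 1 / 2)) hy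
    have hslope : β * μ ^ (β - 1) * ((w - v) * (t - 1 / 2)) ≤
        β * (μ + v * (t - 1 / 2)) ^ (β - 1) * ((w - v) * (t - 1 / 2)) := by
      rcases le_total t (1 / 2) with ht2 | ht2
      · refine mul_le_mul_of_nonpos_right (mul_le_mul_of_nonneg_left ?_ (by linarith))
          (mul_nonpos_of_nonneg_of_nonpos (by linarith) (by linarith))
        exact Real.rpow_le_rpow hy.le (by nlinarith) (by linarith)
      · refine mul_le_mul_of_nonneg_right (mul_le_mul_of_nonneg_left ?_ (by linarith))
          (mul_nonneg (by linarith) (by linarith))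
        exact Real.rpow_le_rpow (by linarith) (by nlinarith) (by linarith)
    nlinarith
  calc ∫ t in (0 : ℝ)..1, (μ + v * (t - 1 / 2)) ^ β
      = ∫ t in (0 : ℝ)..1, ((μ + v * (t - 1 / 2)) ^ β +
          β * μ ^ (β - 1) * ((w - v) * (t - 1 / 2))) := by
        rw [intervalIntegral.integral_add ((hcont v).intervalIntegrable _ _)
          (Continuous.intervalIntegrable (by fun_prop) _ _)]
        norm_num [intervalIntegral.integral_comp_sub_right fun t => t]
    _ ≤ ∫ t in (0 : ℝ)..1, (μ + w * (t - 1 / 2)) ^ β :=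
        intervalIntegral.integral_mono_on zero_le_one
          (Continuous.intervalIntegrable (by fun_prop) _ _) ((hcont w).intervalIntegrable _ _)
          hpt

theorem integral_rpow_affine_le {β u₁ v₁ u₂ v₂ : ℝ} (hβ : 1 ≤ β) (hu₁ : 0 ≤ u₁)
    (hu₂ : 0 < u₂) (hv₂ : 0 ≤ v₂) (hv : v₂ ≤ v₁) (hmid : u₂ + v₂ / 2 ≤ u₁ + v₁ / 2) :
    ∫ t in (0 : ℝ)..1, (u₂ + v₂ * t) ^ β ≤ ∫ t in (0 : ℝ)..1, (u₁ + v₁ * t) ^ β := by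
  have hcont : ∀ u v : ℝ, Continuous fun t : ℝ => (u + v * t) ^ β := fun u v =>
    (by fun_prop : Continuous fun t : ℝ => u + v * t).rpow_const fun _ => Or.inr (by linarith)
  calc ∫ t in (0 : ℝ)..1, (u₂ + v₂ * t) ^ β
      ≤ ∫ t in (0 : ℝ)..1, (u₁ + v₁ / 2 - v₂ / 2 + v₂ * t) ^ β :=
        intervalIntegral.integral_mono_on zero_le_one ((hcont _ _).intervalIntegrable _ _)
          ((hcont _ _).intervalIntegrable _ _) fun t ht =>
            Real.rpow_le_rpow (by nlinarith [ht.1]) (by linarith) (by linarith)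
    _ = ∫ t in (0 : ℝ)..1, (u₁ + v₁ / 2 + v₂ * (t - 1 / 2)) ^ β := by ring_nf
    _ ≤ ∫ t in (0 : ℝ)..1, (u₁ + v₁ / 2 + v₁ * (t - 1 / 2)) ^ β :=
        integral_rpow_affine_le_of_slope_le hβ hv₂ hv (by linarith) (by linarith)
    _ = ∫ t in (0 : ℝ)..1, (u₁ + v₁ * t) ^ β := by ring_nf

theorem rpow_secant_le {α x₁ h₁ x₂ h₂ : ℝ} (hα : 2 ≤ α) (hx₁ : 0 ≤ x₁) (hx₂ : 0 < x₂)
    (hh₂ : 0 < h₂) (hh : h₂ ≤ h₁) (hmid : x₂ + h₂ / 2 ≤ x₁ + h₁ / 2) :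
    ((x₂ + h₂) ^ α - x₂ ^ α) / h₂ ≤ ((x₁ + h₁) ^ α - x₁ ^ α) / h₁ := by
  rw [rpow_add_sub_rpow_div_eq_integral (by linarith) hh₂.ne',
    rpow_add_sub_rpow_div_eq_integral (by linarith) (by linarith)]
  exact mul_le_mul_of_nonneg_left
    (integral_rpow_affine_le (by linarith) hx₁ hx₂ hh₂.le hh hmid) (by linarith)

noncomputable def powerSum (r : ℝ) (n : ℕ) : ℝ := ∑ i ∈ Finset.Icc 1 n, (i : ℝ) ^ r

namespace powerSum

variable (r : ℝ)

@[simp]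
lemma zero : powerSum r 0 = 0 := by simp [powerSum]

lemma succ (n : ℕ) : powerSum r (n + 1) = powerSum r n + ((n : ℝ) + 1) ^ r := by
  rw [powerSum, Finset.sum_Icc_succ_top (by omega), Nat.cast_succ]
  rfl

lemma eq_sum_range (n : ℕ) : powerSum r n = ∑ i ∈ Finset.range n, ((i : ℝ) + 1) ^ r := by
  induction n with
  | zero => simp
  | succ n ih => rw [succ, Finset.sum_range_succ, ih]

lemma pos {n : ℕ} (hn : n ≠ 0) : 0 < powerSum r n := by
  rw [eq_sum_range]
  exact Finset.sum_pos (fun i _ => by positivity) (Finset.nonempty_range_iff.2 hn)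

lemma nonneg (n : ℕ) : 0 ≤ powerSum r n := by
  rw [eq_sum_range]
  exact Finset.sum_nonneg fun i _ => by positivity

end powerSum

theorem antitone_powerSum_add_div {r : ℝ} (hr : 1 ≤ r) :
    Antitone fun n : ℕ => (powerSum r n + powerSum r (n + 1)) / ((n : ℝ) + 1) ^ (r + 1) := by
  have hb : ∀ i : ℕ, 0 < ((i : ℝ) + 1) ^ (r + 1) - (i : ℝ) ^ (r + 1) := fun i =>
    sub_pos.2 (Real.rpow_lt_rpow (by positivity) (by linarith) (by linarith))
  have hab : Antitone fun i : ℕ =>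
      (((i : ℝ) + 1) ^ r + (i : ℝ) ^ r) / (((i : ℝ) + 1) ^ (r + 1) - (i : ℝ) ^ (r + 1)) := by
    refine antitone_nat_of_succ_le fun i => ?_
    rw [div_le_div_iff₀ (hb _) (hb _)]
    have h := rpow_trapezoid_ratio_succ_le hr
      (by linarith [i.cast_nonneg (α := ℝ)] : 1 ≤ (i : ℝ) + 1)
    push_cast
    simpa using h
  have hnum : ∀ n : ℕ, ∑ i ∈ Finset.range (n + 1), (((i : ℝ) + 1) ^ r + (i : ℝ) ^ r) =
      powerSum r n + powerSum r (n + 1) := fun n => by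
    rw [Finset.sum_add_distrib, ← powerSum.eq_sum_range, Finset.sum_range_succ']
    push_cast
    rw [← powerSum.eq_sum_range, Real.zero_rpow (by linarith), add_zero, add_comm]
  have hden : ∀ n : ℕ,
      ∑ i ∈ Finset.range (n + 1), (((i : ℝ) + 1) ^ (r + 1) - (i : ℝ) ^ (r + 1)) =
        ((n : ℝ) + 1) ^ (r + 1) := fun n => by
    have := Finset.sum_range_sub (fun i : ℕ => (i : ℝ) ^ (r + 1)) (n + 1)
    push_cast at this
    rw [this, Real.zero_rpow (by linarith), sub_zero]
  simpa only [hnum, hden] using antitone_sum_range_div_sum_range hb hab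

theorem powerSum_rpow_sub_div_eq_secant (r α : ℝ) (n : ℕ) :
    (powerSum r (n + 1) ^ α - powerSum r n ^ α) / ((n : ℝ) + 1) ^ (α * (r + 1) - 1) =
      ((powerSum r n / ((n : ℝ) + 1) ^ (r + 1) + ((n : ℝ) + 1)⁻¹) ^ α -
        (powerSum r n / ((n : ℝ) + 1) ^ (r + 1)) ^ α) / ((n : ℝ) + 1)⁻¹ := by
  have hc : 0 < (n : ℝ) + 1 := by positivity
  have hx : powerSum r n / ((n : ℝ) + 1) ^ (r + 1) + ((n : ℝ) + 1)⁻¹ =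
      powerSum r (n + 1) / ((n : ℝ) + 1) ^ (r + 1) := by
    rw [powerSum.succ, Real.rpow_add_one hc.ne']
    field_simp
  rw [hx, Real.div_rpow (powerSum.nonneg r _) (by positivity),
    Real.div_rpow (powerSum.nonneg r _) (by positivity), ← Real.rpow_mul hc.le,
    Real.rpow_sub_one hc.ne', mul_comm (r + 1) α]
  field_simp

theorem antitone_powerSum_rpow_sub_div {r α : ℝ} (hr : 1 ≤ r) (hα : 2 ≤ α) :
    Antitone fun n : ℕ =>
      (powerSum r (n + 1) ^ α - powerSum r n ^ α) / ((n : ℝ) + 1) ^ (α * (r + 1) - 1) := by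
  have hmid : ∀ n : ℕ, powerSum r n / ((n : ℝ) + 1) ^ (r + 1) + ((n : ℝ) + 1)⁻¹ / 2 =
      (powerSum r n + powerSum r (n + 1)) / ((n : ℝ) + 1) ^ (r + 1) / 2 := fun n => by
    have hc : 0 < (n : ℝ) + 1 := by positivity
    rw [powerSum.succ, Real.rpow_add_one hc.ne']
    field_simp
    ring
  refine antitone_nat_of_succ_le fun n => ?_
  simp only [powerSum_rpow_sub_div_eq_secant]
  refine rpow_secant_le hα (by have := powerSum.nonneg r n; positivity)
    (div_pos (powerSum.pos r n.succ_ne_zero) (by positivity)) (by positivity)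
    (inv_anti₀ (by positivity) (by push_cast; linarith)) ?_
  rw [hmid, hmid]
  have := antitone_powerSum_add_div hr (Nat.le_succ n)
  push_cast at this ⊢
  linarith

theorem stmt_12 (r α : ℝ) (hr : 1 ≤ r) (hα : 2 ≤ α) (m n : ℕ) (hm : 1 ≤ m) (hmn : m ≤ n) :
    (∑ i ∈ Finset.Icc 1 n, (i : ℝ) ^ r) ^ α / ∑ i ∈ Finset.Icc 1 n, (i : ℝ) ^ (α * (r + 1) - 1) ≤
    (∑ i ∈ Finset.Icc 1 m, (i : ℝ) ^ r) ^ α /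
      ∑ i ∈ Finset.Icc 1 m, (i : ℝ) ^ (α * (r + 1) - 1) := by
  have hstep := antitone_sum_range_div_sum_range (fun j : ℕ => by positivity)
    (antitone_powerSum_rpow_sub_div hr hα)
  have hnum : ∀ n : ℕ, ∑ j ∈ Finset.range n, (powerSum r (j + 1) ^ α - powerSum r j ^ α) =
      powerSum r n ^ α := fun n => by
    rw [Finset.sum_range_sub (fun j => powerSum r j ^ α), powerSum.zero,
      Real.zero_rpow (by linarith), sub_zero]
  simp only [hnum, ← powerSum.eq_sum_range] at hstep
  obtain ⟨m, rfl⟩ := Nat.exists_eq_add_of_le' hm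
  obtain ⟨n, rfl⟩ := Nat.exists_eq_add_of_le' (hm.trans hmn)
  exact hstep (by omega)
end

section
/- For all integers n ≥ 1 and reals r ≥ 1, α ≥ 2, (Σ_{i=1}^{n} i^r)^α / Σ_{i=1}^{n} i^{α(r+1)-1} ≥ (Σ_{i=1}^{n+1} i^r)^α / Σ_{i=1}^{n+1} i^{α(r+1)-1}. -/
/-!
Write `S m = ∑_{i ≤ m} i ^ r`, `d m = S (m + 1) ^ α - S m ^ α` and
`w m = (m + 1) ^ (α (r + 1) - 1)`.
The two sides of the inequality are `∑_{m < n+1} d m / ∑_{m < n+1} w m` and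
`∑_{m < n} d m / ∑_{m < n} w m`, so by the mediant inequality it suffices that `d m / w m` is
antitone. Rescaling by `(m + 1) ^ (r + 1)` turns `d m / w m` into the difference quotient of
`t ↦ t ^ α` on `[y m, x m]`, where `x m = S (m + 1) / (m + 1) ^ (r + 1)` and
`y m = S m / (m + 1) ^ (r + 1)`. This interval has width `1 / (m + 1)`, and its midpoint also
decreases, by a second mediant argument applied to the antitone ratio
`((k + 1) ^ r + k ^ r) / ((k + 1) ^ (r + 1) - k ^ (r + 1))`.
For `α ≥ 2` the difference quotient of `t ^ α` grows both with the midpoint (convexity) and with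
the half-width `v`, because `v ↦ (μ + v) ^ α - (μ - v) ^ α` is convex on `[0, μ]` and vanishes
at `0`.
-/

open Real Finset

theorem ConvexOn.map_add_map_le_of_add_eq {s : Set ℝ} {f : ℝ → ℝ} (hf : ConvexOn ℝ s f)
    {a b c d : ℝ} (ha : a ∈ s) (hd : d ∈ s) (hab : a ≤ b) (hac : a ≤ c) (hbd : b ≤ d)
    (hsum : a + d = b + c) : f b + f c ≤ f a + f d := by
  rcases (hab.trans hbd).eq_or_lt with rfl | had
  · obtain rfl : a = b := le_antisymm hab hbd
    obtain rfl : a = c := by linarith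
    rfl
  set t := (d - b) / (d - a)
  have hda : 0 < d - a := sub_pos.2 had
  have ht0 : 0 ≤ t := div_nonneg (by linarith) hda.le
  have ht1 : t ≤ 1 := (div_le_one hda).2 (by linarith)
  have htd : t * (d - a) = d - b := div_mul_cancel₀ _ hda.ne'
  have hb : t • a + (1 - t) • d = b := by simp only [smul_eq_mul]; linear_combination -htd
  have hc : (1 - t) • a + t • d = c := by simp only [smul_eq_mul]; linear_combination htd + hsum
  have h₁ := hf.2 ha hd ht0 (sub_nonneg.2 ht1) (add_sub_cancel t 1)
  have h₂ := hf.2 ha hd (sub_nonneg.2 ht1) ht0 (sub_add_cancel 1 t)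
  rw [hb] at h₁
  rw [hc] at h₂
  simp only [smul_eq_mul] at h₁ h₂
  linarith

lemma convexOn_rpow_add_sub_rpow_sub_s13 {p μ : ℝ} (hp : 2 ≤ p) :
    ConvexOn ℝ (Set.Icc 0 μ) fun v ↦ (μ + v) ^ p - (μ - v) ^ p := by
  have hp1 : 1 ≤ p := by linarith
  have hderiv : ∀ v, HasDerivAt (fun v ↦ (μ + v) ^ p - (μ - v) ^ p)
      (p * (μ + v) ^ (p - 1) + p * (μ - v) ^ (p - 1)) v := by
    intro v
    have h₁ := ((hasDerivAt_id v).const_add μ).rpow_const (p := p) (Or.inr hp1)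
    have h₂ := ((hasDerivAt_id v).const_sub μ).rpow_const (p := p) (Or.inr hp1)
    refine (h₁.sub h₂).congr_deriv ?_
    simp only [id]
    ring
  refine MonotoneOn.convexOn_of_deriv (convex_Icc 0 μ)
    (fun v _ ↦ (hderiv v).continuousAt.continuousWithinAt)
    (fun v _ ↦ (hderiv v).differentiableAt.differentiableWithinAt) ?_
  rw [interior_Icc]
  intro v₁ hv₁ v₂ hv₂ hv
  rw [(hderiv v₁).deriv, (hderiv v₂).deriv]
  have := (convexOn_rpow (by linarith : 1 ≤ p - 1)).map_add_map_le_of_add_eq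
    (a := μ - v₂) (b := μ - v₁) (c := μ + v₁) (d := μ + v₂)
    (Set.mem_Ici.2 (by linarith [hv₂.2])) (Set.mem_Ici.2 (by linarith [hv₂.1, hv₂.2]))
    (by linarith) (by linarith [hv₁.1, hv₂.1]) (by linarith [hv₁.1, hv₂.1]) (by ring)
  nlinarith

lemma rpow_add_sub_rpow_sub_mul_le {p μ h h' : ℝ} (hp : 2 ≤ p) (hh' : 0 < h') (hh : h' ≤ h)
    (hμ : h ≤ μ) :
    ((μ + h') ^ p - (μ - h') ^ p) * h ≤ ((μ + h) ^ p - (μ - h) ^ p) * h' := by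
  have hsec := (convexOn_rpow_add_sub_rpow_sub_s13 (μ := μ) hp).secant_mono
    (a := 0) (x := h') (y := h) ⟨le_rfl, by linarith⟩ ⟨hh'.le, hh.trans hμ⟩
    ⟨by linarith, hμ⟩ hh'.ne' (by linarith) hh
  simp only [add_zero, sub_zero, sub_self] at hsec
  rwa [div_le_div_iff₀ hh' (by linarith)] at hsec

lemma rpow_sub_rpow_div_sub_le {p x y x' y' : ℝ} (hp : 2 ≤ p) (hy : 0 ≤ y) (hy' : 0 ≤ y')
    (hxy' : y' < x') (hd : x' - y' ≤ x - y) (hs : x' + y' ≤ x + y) :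
    (x' ^ p - y' ^ p) / (x' - y') ≤ (x ^ p - y ^ p) / (x - y) := by
  set μ := (x + y) / 2 with hμ
  set h := (x - y) / 2 with hh
  set h' := (x' - y') / 2 with hh'
  have hshift : x' ^ p - y' ^ p ≤ (μ + h') ^ p - (μ - h') ^ p := by
    have := (convexOn_rpow (by linarith : 1 ≤ p)).map_add_map_le_of_add_eq
      (a := y') (b := μ - h') (c := x') (d := μ + h') hy' (Set.mem_Ici.2 (by linarith))
      (by linarith) hxy'.le (by linarith) (by linarith)
    linarith
  have hwiden := rpow_add_sub_rpow_sub_mul_le (μ := μ) hp (by linarith : 0 < h')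
    (by linarith : h' ≤ h) (by linarith : h ≤ μ)
  rw [show μ + h = x by linarith, show μ - h = y by linarith] at hwiden
  rw [div_le_div_iff₀ (by linarith) (by linarith), show x - y = 2 * h by linarith,
    show x' - y' = 2 * h' by linarith]
  nlinarith [mul_le_mul_of_nonneg_right hshift (by linarith : 0 ≤ h)]

lemma two_mul_one_sub_mul_rpow_le {q t w : ℝ} (hq : 0 ≤ q) (hw : 0 ≤ w) (hwt : w ≤ t)
    (ht : t ≤ 1) : 2 * (1 - t * w) ^ q ≤ (1 + w) ^ q + (1 - w) ^ q := by
  have hplus : 0 ≤ (1 + w) ^ q := by positivity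
  have hminus : 0 ≤ (1 - w) ^ q := rpow_nonneg (by linarith) q
  have hamgm := geom_mean_le_arith_mean2_weighted (by norm_num : (0 : ℝ) ≤ 1 / 2)
    (by norm_num : (0 : ℝ) ≤ 1 / 2) hplus hminus (by norm_num)
  rw [← rpow_mul (by linarith), ← rpow_mul (by linarith),
    ← mul_rpow (by linarith) (by linarith)] at hamgm
  have hsq : (1 - t * w) ^ q = ((1 - t * w) ^ 2) ^ (q * (1 / 2)) := by
    rw [← rpow_natCast, ← rpow_mul (by nlinarith)]
    ring_nf
  have htw : t * w ≤ 1 := mul_le_one₀ ht hw (hwt.trans ht)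
  have hbase : (1 - t * w) ^ 2 ≤ (1 + w) * (1 - w) := by
    nlinarith [mul_nonneg hw (sub_nonneg.2 hwt),
      mul_nonneg hw (mul_nonneg (hw.trans hwt) (sub_nonneg.2 htw))]
  have hcmp := rpow_le_rpow (sq_nonneg _) hbase (by positivity : 0 ≤ q * (1 / 2))
  linarith

lemma two_mul_one_sub_rpow_le {r t : ℝ} (hr : 1 ≤ r) (ht0 : 0 ≤ t) (ht1 : t ≤ 1) :
    2 * (1 - (1 - t ^ 2) ^ r) ≤ t * ((1 + t) ^ r - (1 - t) ^ r) := by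
  -- `G 0 = 2`, while `G t` is the right-hand side plus `2 * (1 - t ^ 2) ^ r`.
  set G : ℝ → ℝ := fun w ↦ t * ((1 + w) ^ r - (1 - w) ^ r) + 2 * (1 - t * w) ^ r
  have hG : ∀ w, HasDerivAt G
      (r * t * ((1 + w) ^ (r - 1) + (1 - w) ^ (r - 1) - 2 * (1 - t * w) ^ (r - 1))) w := by
    intro w
    have h₁ := ((hasDerivAt_id w).const_add 1).rpow_const (p := r) (Or.inr hr)
    have h₂ := ((hasDerivAt_id w).const_sub 1).rpow_const (p := r) (Or.inr hr)
    have h₃ := (((hasDerivAt_id w).const_mul t).const_sub 1).rpow_const (p := r) (Or.inr hr)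
    refine (((h₁.sub h₂).const_mul t).add (h₃.const_mul 2)).congr_deriv ?_
    simp only [id]
    ring
  have hmono : MonotoneOn G (Set.Icc 0 t) := by
    refine monotoneOn_of_hasDerivWithinAt_nonneg (convex_Icc 0 t)
      (fun w _ ↦ (hG w).continuousAt.continuousWithinAt) (fun w _ ↦ (hG w).hasDerivWithinAt) ?_
    rw [interior_Icc]
    intro w hw
    have := two_mul_one_sub_mul_rpow_le (by linarith : 0 ≤ r - 1) hw.1.le hw.2.le ht1
    have : 0 ≤ r * t := by positivity
    nlinarith
  have := hmono ⟨le_rfl, ht0⟩ ⟨ht0, le_rfl⟩ ht0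
  simp only [G, add_zero, sub_zero, mul_zero, one_rpow, sub_self, ← sq] at this
  linarith

lemma rpow_add_rpow_mul_rpow_sub_rpow_le {r A B C : ℝ} (hr : 1 ≤ r) (hC : 0 ≤ C)
    (hCB : C ≤ B) (hABC : A + C = 2 * B) :
    (A ^ r + B ^ r) * (B ^ (r + 1) - C ^ (r + 1)) ≤
      (A ^ (r + 1) - B ^ (r + 1)) * (B ^ r + C ^ r) := by
  rcases (hC.trans hCB).eq_or_lt with rfl | hB
  · obtain rfl : C = 0 := le_antisymm hCB hC
    obtain rfl : A = 0 := by linarith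
    simp
  set t := (B - C) / B
  have htB : t * B = B - C := div_mul_cancel₀ _ hB.ne'
  have hA : A = B * (1 + t) := by linear_combination hABC - htB
  have hC' : C = B * (1 - t) := by linear_combination htB
  have ht0 : 0 ≤ t := div_nonneg (by linarith) hB.le
  have ht1 : t ≤ 1 := (div_le_one hB).2 (by linarith)
  have hkey := two_mul_one_sub_rpow_le hr ht0 ht1
  rw [show 1 - t ^ 2 = (1 + t) * (1 - t) by ring, mul_rpow (by linarith) (by linarith)] at hkey
  have hscale : ∀ u : ℝ, 0 ≤ u → (B * u) ^ (r + 1) = B ^ r * B * (u ^ r * u) := by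
    intro u hu
    rw [mul_rpow hB.le hu, rpow_add_one hB.ne', rpow_add_one' hu (by linarith)]
  rw [hA, hC', hscale _ (by linarith), hscale _ (by linarith), mul_rpow hB.le (by linarith),
    mul_rpow hB.le (by linarith), rpow_add_one hB.ne']
  have hBr : 0 ≤ B ^ r * B ^ r * B := by positivity
  nlinarith [mul_le_mul_of_nonneg_left hkey hBr]

lemma antitone_rpow_add_rpow_div_rpow_sub_rpow {r : ℝ} (hr : 1 ≤ r) :
    Antitone fun k : ℕ ↦ (((k : ℝ) + 1) ^ r + (k : ℝ) ^ r) /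
      (((k : ℝ) + 1) ^ (r + 1) - (k : ℝ) ^ (r + 1)) := by
  have hpos : ∀ k : ℕ, 0 < ((k : ℝ) + 1) ^ (r + 1) - (k : ℝ) ^ (r + 1) := fun k ↦
    sub_pos.2 (rpow_lt_rpow (Nat.cast_nonneg k) (lt_add_one _) (by linarith))
  refine antitone_nat_of_succ_le fun k ↦ ?_
  rw [div_le_div_iff₀ (hpos (k + 1)) (hpos k)]
  push_cast
  have := rpow_add_rpow_mul_rpow_sub_rpow_le hr (Nat.cast_nonneg' k)
    (le_add_of_nonneg_right zero_le_one) (by ring : (k : ℝ) + 1 + 1 + k = 2 * (k + 1))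
  linarith

lemma sum_range_succ_div_sum_range_succ_le {a b : ℕ → ℝ} (hb : ∀ k, 0 < b k)
    (hab : Antitone fun k ↦ a k / b k) {n : ℕ} (hn : 1 ≤ n) :
    (∑ k ∈ range (n + 1), a k) / ∑ k ∈ range (n + 1), b k ≤
      (∑ k ∈ range n, a k) / ∑ k ∈ range n, b k := by
  have hB : 0 < ∑ k ∈ range n, b k :=
    sum_pos (fun k _ ↦ hb k) (nonempty_range_iff.2 (by omega))
  have hmediant : a n * ∑ k ∈ range n, b k ≤ b n * ∑ k ∈ range n, a k := by
    rw [mul_sum, mul_sum]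
    refine sum_le_sum fun k hk ↦ ?_
    have := hab (mem_range.1 hk).le
    rw [div_le_div_iff₀ (hb n) (hb k)] at this
    rwa [mul_comm (b n)]
  rw [sum_range_succ, sum_range_succ, div_le_div_iff₀ (by linarith [hb n]) hB]
  nlinarith

noncomputable def powSum (r : ℝ) (n : ℕ) : ℝ := ∑ i ∈ Icc 1 n, (i : ℝ) ^ r

lemma powSum_zero (r : ℝ) : powSum r 0 = 0 := by simp [powSum]

lemma powSum_succ (r : ℝ) (n : ℕ) : powSum r (n + 1) = powSum r n + ((n : ℝ) + 1) ^ r := by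
  rw [powSum, powSum, sum_Icc_succ_top (by omega)]
  push_cast
  rfl

lemma powSum_eq_sum_range (r : ℝ) (n : ℕ) :
    powSum r n = ∑ k ∈ range n, ((k : ℝ) + 1) ^ r := by
  induction n with
  | zero => exact powSum_zero r
  | succ n ih => rw [powSum_succ, ih, sum_range_succ]

lemma powSum_nonneg (r : ℝ) (n : ℕ) : 0 ≤ powSum r n :=
  sum_nonneg fun i _ ↦ rpow_nonneg (Nat.cast_nonneg i) r

lemma powSum_add_powSum_div_le {r : ℝ} (hr : 1 ≤ r) (m : ℕ) :
    (powSum r (m + 2) + powSum r (m + 1)) / ((m : ℝ) + 2) ^ (r + 1) ≤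
      (powSum r (m + 1) + powSum r m) / ((m : ℝ) + 1) ^ (r + 1) := by
  have hsum : ∀ n : ℕ, ∑ k ∈ range (n + 1), (((k : ℝ) + 1) ^ r + (k : ℝ) ^ r) =
      powSum r (n + 1) + powSum r n := by
    intro n
    rw [sum_add_distrib, powSum_eq_sum_range, powSum_eq_sum_range]
    congr 1
    rw [sum_range_succ', Nat.cast_zero, zero_rpow (by linarith), add_zero]
    push_cast
    rfl
  have htel : ∀ n : ℕ,
      ∑ k ∈ range (n + 1), (((k : ℝ) + 1) ^ (r + 1) - (k : ℝ) ^ (r + 1)) =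
      ((n : ℝ) + 1) ^ (r + 1) := by
    intro n
    have := sum_range_sub (fun k : ℕ ↦ (k : ℝ) ^ (r + 1)) (n + 1)
    push_cast at this
    rw [this, zero_rpow (by linarith), sub_zero]
  have hmediant := sum_range_succ_div_sum_range_succ_le
    (fun k ↦ sub_pos.2 (rpow_lt_rpow (Nat.cast_nonneg k) (lt_add_one _) (by linarith)))
    (antitone_rpow_add_rpow_div_rpow_sub_rpow hr) (n := m + 1) (by omega)
  rw [hsum, hsum, htel, htel] at hmediant
  push_cast at hmediant
  rwa [show (m : ℝ) + 1 + 1 = m + 2 by ring] at hmediant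

lemma add_rpow_div_rpow_add_one_sub_div {r P v : ℝ} (hP : 0 < P) :
    (v + P ^ r) / P ^ (r + 1) - v / P ^ (r + 1) = P⁻¹ := by
  rw [← sub_div, add_sub_cancel_left, rpow_add_one hP.ne',
    div_mul_cancel_left₀ (rpow_pos_of_pos hP r).ne']

lemma rpow_sub_rpow_div_rpow_eq {α r P u v : ℝ} (hP : 0 < P) (hu : 0 ≤ u) (hv : 0 ≤ v)
    (huv : u = v + P ^ r) :
    (u ^ α - v ^ α) / P ^ (α * (r + 1) - 1) =
      ((u / P ^ (r + 1)) ^ α - (v / P ^ (r + 1)) ^ α) / (u / P ^ (r + 1) - v / P ^ (r + 1)) := by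
  have hK : 0 ≤ P ^ (r + 1) := (rpow_pos_of_pos hP _).le
  rw [huv, add_rpow_div_rpow_add_one_sub_div hP, ← huv, div_rpow hu hK, div_rpow hv hK,
    ← sub_div, ← rpow_mul hP.le, rpow_sub_one hP.ne', mul_comm (r + 1)]
  field_simp

lemma antitone_powSum_rpow_sub_div {r α : ℝ} (hr : 1 ≤ r) (hα : 2 ≤ α) :
    Antitone fun m : ℕ ↦ (powSum r (m + 1) ^ α - powSum r m ^ α) /
      ((m : ℝ) + 1) ^ (α * (r + 1) - 1) := by
  refine antitone_nat_of_succ_le fun m ↦ ?_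
  have hP₁ : (0 : ℝ) < m + 1 := by positivity
  have hP₂ : (0 : ℝ) < m + 2 := by positivity
  have hK₁ := rpow_pos_of_pos hP₁ (r + 1)
  have hK₂ := rpow_pos_of_pos hP₂ (r + 1)
  have hS₀ := powSum_nonneg r m
  have hS₁ := powSum_nonneg r (m + 1)
  have hS₂ := powSum_nonneg r (m + 2)
  have hstep₁ : powSum r (m + 1) = powSum r m + ((m : ℝ) + 1) ^ r := powSum_succ r m
  have hstep₂ : powSum r (m + 2) = powSum r (m + 1) + ((m : ℝ) + 2) ^ r := by
    rw [powSum_succ, Nat.cast_succ, add_assoc, one_add_one_eq_two]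
  have hw₁ := add_rpow_div_rpow_add_one_sub_div (r := r) (v := powSum r m) hP₁
  have hw₂ := add_rpow_div_rpow_add_one_sub_div (r := r) (v := powSum r (m + 1)) hP₂
  rw [← hstep₁] at hw₁
  rw [← hstep₂] at hw₂
  push_cast
  rw [show (m : ℝ) + 1 + 1 = m + 2 by ring, rpow_sub_rpow_div_rpow_eq hP₁ hS₁ hS₀ hstep₁,
    rpow_sub_rpow_div_rpow_eq hP₂ hS₂ hS₁ hstep₂]
  refine rpow_sub_rpow_div_sub_le hα (div_nonneg hS₀ hK₁.le) (div_nonneg hS₁ hK₂.le)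
    ?_ ?_ ?_
  · rw [← sub_pos, hw₂]
    positivity
  · rw [hw₁, hw₂]
    exact inv_anti₀ hP₁ (by linarith)
  · rw [← add_div, ← add_div]
    exact powSum_add_powSum_div_le hr m

theorem stmt_13 (n : ℕ) (hn : 1 ≤ n) (r α : ℝ) (hr : 1 ≤ r) (hα : 2 ≤ α) :
    (∑ i ∈ Finset.Icc 1 (n + 1), (i : ℝ) ^ r) ^ α /
        ∑ i ∈ Finset.Icc 1 (n + 1), (i : ℝ) ^ (α * (r + 1) - 1) ≤
    (∑ i ∈ Finset.Icc 1 n, (i : ℝ) ^ r) ^ α /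
        ∑ i ∈ Finset.Icc 1 n, (i : ℝ) ^ (α * (r + 1) - 1) := by
  have htelescope : ∀ m,
      powSum r m ^ α = ∑ k ∈ range m, (powSum r (k + 1) ^ α - powSum r k ^ α) := fun m ↦ by
    rw [sum_range_sub (fun k ↦ powSum r k ^ α), powSum_zero, zero_rpow (by linarith), sub_zero]
  change powSum r (n + 1) ^ α / powSum (α * (r + 1) - 1) (n + 1) ≤
    powSum r n ^ α / powSum (α * (r + 1) - 1) n
  rw [htelescope, htelescope, powSum_eq_sum_range, powSum_eq_sum_range]
  exact sum_range_succ_div_sum_range_succ_le (fun k ↦ by positivity)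
    (antitone_powSum_rpow_sub_div hr hα) hn
end

section
/- (Martins' inequality) For every integer n ≥ 1 and real r > 0, ((1/n)Σ_{i=1}^n i^r / ((1/(n+1))Σ_{i=1}^{n+1} i^r))^{1/r} < (n!)^{1/n} / ((n+1)!)^{1/(n+1)}. -/
/-!
Write `c m = (m!)^(1/m)` and `S n = ∑_{i ≤ n} i^r`. Raising to the power `r`, the inequality
becomes `(n+1) S_n c_{n+1}^r < n S_{n+1} c_n^r`, i.e. `S_n Δ_n < n (n+1)^r c_n^r` with
`Δ_n = (n+1) c_{n+1}^r - n c_n^r`. This is proved by induction on `n`, the step resting on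
`(n+1)^r Δ_{n+1} ≤ (n+2)^r Δ_n`. That inequality is a two-point majorization for the convex
function `t ↦ exp (r t)`: the logarithms of `(n+1) c_{n+2}` and `(n+2) c_n` lie between those of
`(n+1) c_{n+1}` and `(n+2) c_{n+1}`, with the same weighted sum. The bounds needed for this are
`c_m ≤ c_{m+1} ≤ (m+2)/(m+1) · c_m`; the second follows by induction from the monotonicity of
`x log (1 + 1/x)`, a consequence of Bernoulli's inequality.
-/

open Real Finset
open scoped Nat

namespace ConvexOn

variable {𝕜 : Type*} [Field 𝕜] [LinearOrder 𝕜] [IsStrictOrderedRing 𝕜] {s : Set 𝕜} {f : 𝕜 → 𝕜}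
  {u v x y : 𝕜}

theorem sub_mul_le_of_mem_Icc (hf : ConvexOn 𝕜 s f) (hu : u ∈ s) (hv : v ∈ s)
    (hx : x ∈ Set.Icc u v) : (v - u) * f x ≤ (v - x) * f u + (x - u) * f v := by
  obtain ⟨hux, hxv⟩ := hx
  rcases hux.eq_or_lt with rfl | hux
  · simp
  rcases hxv.eq_or_lt with rfl | hxv
  · simp
  exact hf.secant_mono_aux1 hu hv hux hxv

theorem add_mul_le_of_mem_Icc (hf : ConvexOn 𝕜 s f) (hu : u ∈ s) (hv : v ∈ s)
    (hx : x ∈ Set.Icc u v) (hy : y ∈ Set.Icc u v) {a b c d : 𝕜} (ha : 0 ≤ a) (hb : 0 ≤ b)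
    (hw : a + b = c + d) (hm : a * x + b * y = c * u + d * v) :
    a * f x + b * f y ≤ c * f u + d * f v := by
  rcases (hx.1.trans hx.2).eq_or_lt with huv | huv
  · have hxu : x = u := le_antisymm (huv ▸ hx.2) hx.1
    have hyu : y = u := le_antisymm (huv ▸ hy.2) hy.1
    rw [hxu, hyu, ← huv]
    linear_combination f u * hw
  have hx' := mul_le_mul_of_nonneg_left (hf.sub_mul_le_of_mem_Icc hu hv hx) ha
  have hy' := mul_le_mul_of_nonneg_left (hf.sub_mul_le_of_mem_Icc hu hv hy) hb
  refine le_of_mul_le_mul_left ?_ (sub_pos.2 huv)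
  linear_combination hx' + hy' + (v * f u - u * f v) * hw + (f v - f u) * hm

end ConvexOn

theorem Real.two_mul_add_one_mul_log_add_one_le {x : ℝ} (hx : 0 < x) :
    (2 * x + 1) * log (x + 1) ≤ x * log x + (x + 1) * log (x + 2) := by
  have hbern := one_add_mul_self_le_rpow_one_add (s := -1 / (x + 1) ^ 2) (p := x + 1)
    (by rw [neg_div, neg_le_neg_iff, div_le_one (by positivity)]; nlinarith) (by linarith)
  have h₁ : 1 + (x + 1) * (-1 / (x + 1) ^ 2) = x / (x + 1) := by field_simp; ring
  have h₂ : 1 + -1 / (x + 1) ^ 2 = x * (x + 2) / (x + 1) ^ 2 := by field_simp; ring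
  rw [h₁, h₂] at hbern
  have hlog := log_le_log (by positivity) hbern
  rw [log_rpow (by positivity), log_div (by positivity) (by positivity),
    log_div (by positivity) (by positivity), log_mul (by positivity) (by positivity),
    log_pow] at hlog
  push_cast at hlog
  linarith

/-- `log ((m!)^(1/m))`, with the value `0` at `m = 0`. -/
noncomputable def logFactorialRoot (m : ℕ) : ℝ := log (m ! : ℝ) / m

theorem natCast_mul_logFactorialRoot (m : ℕ) : m * logFactorialRoot m = log (m ! : ℝ) := by
  rcases m.eq_zero_or_pos with rfl | hm
  · simp
  · exact mul_div_cancel₀ _ (by positivity)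

theorem succ_mul_logFactorialRoot_succ (m : ℕ) :
    (m + 1) * logFactorialRoot (m + 1) = log (m + 1) + m * logFactorialRoot m := by
  have h := natCast_mul_logFactorialRoot (m + 1)
  push_cast at h
  rw [h, natCast_mul_logFactorialRoot, Nat.factorial_succ, Nat.cast_mul,
    log_mul (by positivity) (by positivity), Nat.cast_succ]

theorem logFactorialRoot_le_log_succ (m : ℕ) : logFactorialRoot m ≤ log (m + 1) := by
  refine div_le_of_le_mul₀ m.cast_nonneg (log_nonneg (by linarith [m.cast_nonneg (α := ℝ)])) ?_
  rw [mul_comm, ← log_pow]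
  refine log_le_log (by positivity) ?_
  exact_mod_cast (Nat.factorial_le_pow m).trans (Nat.pow_le_pow_left m.le_succ m)

theorem log_succ_le_logFactorialRoot_add (m : ℕ) :
    (m + 2) * log (m + 1) ≤ logFactorialRoot m + (m + 1) * log (m + 2) := by
  induction m with
  | zero => simpa [logFactorialRoot] using log_nonneg one_le_two
  | succ m ih =>
    have hE := mul_le_mul_of_nonneg_left
      (two_mul_add_one_mul_log_add_one_le (x := m + 1) (by positivity))
      (by positivity : (0 : ℝ) ≤ m + 1)
    have hih := mul_le_mul_of_nonneg_left ih m.cast_nonneg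
    push_cast
    simp only [add_assoc, one_add_one_eq_two, show (1 : ℝ) + 2 = 3 by norm_num] at hE ⊢
    refine le_of_mul_le_mul_left ?_ (by positivity : (0 : ℝ) < m + 1)
    linear_combination hih + hE - succ_mul_logFactorialRoot_succ m

theorem logFactorialRoot_le_succ (m : ℕ) : logFactorialRoot m ≤ logFactorialRoot (m + 1) := by
  refine le_of_mul_le_mul_left ?_ (by positivity : (0 : ℝ) < m + 1)
  linear_combination -succ_mul_logFactorialRoot_succ m + logFactorialRoot_le_log_succ m

theorem logFactorialRoot_succ_sub_le (m : ℕ) :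
    logFactorialRoot (m + 1) - logFactorialRoot m ≤ log (m + 2) - log (m + 1) := by
  refine le_of_mul_le_mul_left ?_ (by positivity : (0 : ℝ) < m + 1)
  linear_combination succ_mul_logFactorialRoot_succ m + log_succ_le_logFactorialRoot_add m

theorem rpow_mul_sub_exp_logFactorialRoot_le (r : ℝ) (n : ℕ) :
    ((n : ℝ) + 1) ^ r * ((n + 2) * exp (r * logFactorialRoot (n + 2))
        - (n + 1) * exp (r * logFactorialRoot (n + 1))) ≤
      ((n : ℝ) + 2) ^ r * ((n + 1) * exp (r * logFactorialRoot (n + 1))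
        - n * exp (r * logFactorialRoot n)) := by
  have hconv : ConvexOn ℝ Set.univ (fun t ↦ exp (r * t)) :=
    convexOn_exp.comp_linearMap (LinearMap.mul ℝ ℝ r)
  have hmono₀ := logFactorialRoot_le_succ n
  have hmono₁ := logFactorialRoot_le_succ (n + 1)
  have hslope₀ := logFactorialRoot_succ_sub_le n
  have hslope₁ := logFactorialRoot_succ_sub_le (n + 1)
  have hrec₀ := succ_mul_logFactorialRoot_succ n
  have hrec₁ := succ_mul_logFactorialRoot_succ (n + 1)
  push_cast at hmono₁ hslope₁ hrec₁
  simp only [add_assoc, one_add_one_eq_two, show (1 : ℝ) + 2 = 3 by norm_num]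
    at hmono₁ hslope₁ hrec₁
  have hlog_concave : log ((n : ℝ) + 3) - log (n + 2) ≤ log (n + 2) - log (n + 1) := by
    rw [← log_div (by positivity) (by positivity), ← log_div (by positivity) (by positivity)]
    refine log_le_log (by positivity) ?_
    rw [div_le_div_iff₀ (by positivity) (by positivity)]
    nlinarith
  have key := hconv.add_mul_le_of_mem_Icc (Set.mem_univ (log (n + 1) + logFactorialRoot (n + 1)))
    (Set.mem_univ (log (n + 2) + logFactorialRoot (n + 1)))
    (x := log (n + 1) + logFactorialRoot (n + 2)) (y := log (n + 2) + logFactorialRoot n)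
    ⟨by linarith, by linarith⟩ ⟨by linarith, by linarith⟩
    (a := n + 2) (b := n) (c := n + 1) (d := n + 1) (by positivity) (by positivity) (by ring)
    (by linear_combination hrec₁ - hrec₀)
  simp only [mul_add, exp_add] at key
  rw [rpow_def_of_pos (by positivity), rpow_def_of_pos (by positivity), mul_comm (log _) r,
    mul_comm (log _) r]
  linarith

theorem sum_rpow_mul_sub_exp_logFactorialRoot_lt {r : ℝ} (hr : r ≠ 0) {n : ℕ} (hn : 1 ≤ n) :
    (∑ i ∈ Icc 1 n, (i : ℝ) ^ r) * ((n + 1) * exp (r * logFactorialRoot (n + 1))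
        - n * exp (r * logFactorialRoot n)) <
      n * ((n : ℝ) + 1) ^ r * exp (r * logFactorialRoot n) := by
  induction n, hn using Nat.le_induction with
  | base =>
    have hL₁ : logFactorialRoot 1 = 0 := by simp [logFactorialRoot]
    have hL₂ : logFactorialRoot 2 = log 2 / 2 := by simp [logFactorialRoot, Nat.factorial]
    norm_num [hL₁, hL₂]
    set t := exp (r * (log 2 / 2))
    have ht : t ≠ 1 := by
      simpa [t, exp_eq_one_iff] using mul_ne_zero hr (by positivity : log 2 / 2 ≠ 0)
    have h2 : (2 : ℝ) ^ r = t ^ 2 := by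
      rw [rpow_def_of_pos two_pos, sq, ← exp_add]
      ring_nf
    rw [h2]
    nlinarith [sq_pos_of_ne_zero (sub_ne_zero.2 ht)]
  | succ n hn ih =>
    rw [sum_Icc_succ_top (by omega)]
    push_cast
    simp only [add_assoc, one_add_one_eq_two]
    set a := ∑ i ∈ Icc 1 n, (i : ℝ) ^ r
    set A := ((n : ℝ) + 1) ^ r
    set B := ((n : ℝ) + 2) ^ r
    set g₀ := exp (r * logFactorialRoot n)
    set g₁ := exp (r * logFactorialRoot (n + 1))
    set g₂ := exp (r * logFactorialRoot (n + 2))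
    have hA : 0 < A := by positivity
    have hB : 0 < B := by positivity
    have ha : 0 ≤ a := by positivity
    refine lt_of_mul_lt_mul_left ?_ hA.le
    calc A * ((a + A) * ((n + 2) * g₂ - (n + 1) * g₁))
        = (a + A) * (A * ((n + 2) * g₂ - (n + 1) * g₁)) := by ring
      _ ≤ (a + A) * (B * ((n + 1) * g₁ - n * g₀)) :=
          mul_le_mul_of_nonneg_left (rpow_mul_sub_exp_logFactorialRoot_le r n) (by positivity)
      _ = B * (a * ((n + 1) * g₁ - n * g₀)) + A * B * ((n + 1) * g₁ - n * g₀) := by ring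
      _ < B * (n * A * g₀) + A * B * ((n + 1) * g₁ - n * g₀) := by gcongr
      _ = A * ((n + 1) * B * g₁) := by ring

theorem sum_rpow_div_div_lt_exp_div_exp {r : ℝ} (hr : r ≠ 0) {n : ℕ} (hn : 1 ≤ n) :
    ((∑ i ∈ Icc 1 n, (i : ℝ) ^ r) / n) / ((∑ i ∈ Icc 1 (n + 1), (i : ℝ) ^ r) / (n + 1)) <
      exp (r * logFactorialRoot n) / exp (r * logFactorialRoot (n + 1)) := by
  have h := sum_rpow_mul_sub_exp_logFactorialRoot_lt hr hn
  have ha : 0 < ∑ i ∈ Icc 1 n, (i : ℝ) ^ r :=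
    sum_pos (fun i hi ↦ by have := (mem_Icc.1 hi).1; positivity) (nonempty_Icc.2 hn)
  rw [sum_Icc_succ_top (by omega), div_div_div_eq, div_lt_div_iff₀ (by positivity) (by positivity)]
  push_cast
  linarith

theorem stmt_17 (n : ℕ) (hn : 1 ≤ n) (r : ℝ) (hr : 0 < r) :
    (((∑ i ∈ Finset.Icc 1 n, (i : ℝ) ^ r) / n) /
        ((∑ i ∈ Finset.Icc 1 (n + 1), (i : ℝ) ^ r) / (n + 1))) ^ (1 / r) <
      (n.factorial : ℝ) ^ ((1 : ℝ) / n) /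
        ((n + 1).factorial : ℝ) ^ ((1 : ℝ) / (n + 1)) := by
  have hroot (m : ℕ) : (m ! : ℝ) ^ ((1 : ℝ) / m) = exp (logFactorialRoot m) := by
    rw [rpow_def_of_pos (by positivity), mul_one_div, logFactorialRoot]
  have hroot₁ := hroot (n + 1)
  push_cast at hroot₁
  rw [hroot, hroot₁, one_div r, rpow_inv_lt_iff_of_pos (by positivity) (by positivity) hr,
    div_rpow (by positivity) (by positivity), ← exp_mul, ← exp_mul, mul_comm _ r, mul_comm _ r]
  exact sum_rpow_div_div_lt_exp_div_exp hr.ne' hn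
end

section
/- (Bennett) For every integer n ≥ 1 and real r ≥ 1, ((1/n)Σ_{i=1}^n i^r / ((1/(n+1))Σ_{i=1}^{n+1} i^r))^{1/r} ≤ (n+1)/(n+2), with the inequality reversed for 0 < r ≤ 1. -/
/-!
Raising both sides to the power `r` and clearing denominators, with `S n = ∑ i ∈ Icc 1 n, i ^ r`
the claim for `r ≥ 1` becomes `S n * h n ≤ n * (n + 1) ^ r`, where
`h n = (n + 1) * ((n + 2) / (n + 1)) ^ r - n`. This follows by induction as soon as `h` is
antitone, because `S (n + 1) * h (n + 1) ≤ S (n + 1) * h n = S n * h n + (n + 1) ^ r * h n`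
and `(n + 1) ^ r * h n = (n + 1) * (n + 2) ^ r - n * (n + 1) ^ r`. Extending `h` to the real
function `x ↦ (x + 2) ^ r * (x + 1) ^ (1 - r) - x`, its derivative is nonpositive by Bernoulli's
inequality for `(1 - 1 / (x + 2)) ^ r`. For `0 < r ≤ 1` every inequality reverses.
-/

open Real Finset

section MeanRatio

variable {a h : ℕ → ℝ}

-- `hrel` says `h m = (m + 1) * a (m + 2) / a (m + 1) - m`, without dividing.

theorem sum_mul_le_of_antitone (ha : ∀ k, 0 ≤ a k)
    (hrel : ∀ m : ℕ, a (m + 1) * h m = (m + 1) * a (m + 2) - m * a (m + 1))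
    (hh : Antitone h) (n : ℕ) :
    (∑ i ∈ Icc 1 n, a i) * h n ≤ n * a (n + 1) := by
  induction n with
  | zero => simp
  | succ m ih =>
    have hS : 0 ≤ ∑ i ∈ Icc 1 (m + 1), a i := sum_nonneg fun i _ => ha i
    calc (∑ i ∈ Icc 1 (m + 1), a i) * h (m + 1)
        ≤ (∑ i ∈ Icc 1 (m + 1), a i) * h m := mul_le_mul_of_nonneg_left (hh m.le_succ) hS
      _ = (∑ i ∈ Icc 1 m, a i) * h m + a (m + 1) * h m := by
        rw [sum_Icc_succ_top (by omega), add_mul]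
      _ ≤ m * a (m + 1) + a (m + 1) * h m := by gcongr
      _ = (m + 1 : ℕ) * a (m + 1 + 1) := by rw [hrel]; push_cast; ring

theorem le_sum_mul_of_monotone (ha : ∀ k, 0 ≤ a k)
    (hrel : ∀ m : ℕ, a (m + 1) * h m = (m + 1) * a (m + 2) - m * a (m + 1))
    (hh : Monotone h) (n : ℕ) :
    n * a (n + 1) ≤ (∑ i ∈ Icc 1 n, a i) * h n := by
  induction n with
  | zero => simp
  | succ m ih =>
    have hS : 0 ≤ ∑ i ∈ Icc 1 (m + 1), a i := sum_nonneg fun i _ => ha i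
    calc ((m + 1 : ℕ) : ℝ) * a (m + 1 + 1)
        = m * a (m + 1) + a (m + 1) * h m := by rw [hrel]; push_cast; ring
      _ ≤ (∑ i ∈ Icc 1 m, a i) * h m + a (m + 1) * h m := by gcongr
      _ = (∑ i ∈ Icc 1 (m + 1), a i) * h m := by
        rw [sum_Icc_succ_top (by omega), add_mul]
      _ ≤ (∑ i ∈ Icc 1 (m + 1), a i) * h (m + 1) :=
        mul_le_mul_of_nonneg_left (hh m.le_succ) hS

theorem mean_ratio_le_of_antitone (ha : ∀ k, 0 ≤ a k)
    (hrel : ∀ m : ℕ, a (m + 1) * h m = (m + 1) * a (m + 2) - m * a (m + 1))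
    (hh : Antitone h) {n : ℕ} (hn : 1 ≤ n) (hA : 0 < a (n + 1)) (hB : 0 < a (n + 2)) :
    ((∑ i ∈ Icc 1 n, a i) / n) / ((∑ i ∈ Icc 1 (n + 1), a i) / (n + 1)) ≤
      a (n + 1) / a (n + 2) := by
  have key := sum_mul_le_of_antitone ha hrel hh n
  have hn0 : (0 : ℝ) < n := by exact_mod_cast hn
  have hS : 0 ≤ ∑ i ∈ Icc 1 n, a i := sum_nonneg fun i _ => ha i
  rw [sum_Icc_succ_top (by omega), div_div_div_eq, div_le_div_iff₀ (by positivity) hB]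
  linear_combination a (n + 1) * key - (∑ i ∈ Icc 1 n, a i) * hrel n


theorem mean_ratio_ge_of_monotone (ha : ∀ k, 0 ≤ a k)
    (hrel : ∀ m : ℕ, a (m + 1) * h m = (m + 1) * a (m + 2) - m * a (m + 1))
    (hh : Monotone h) {n : ℕ} (hn : 1 ≤ n) (hA : 0 < a (n + 1)) (hB : 0 < a (n + 2)) :
    a (n + 1) / a (n + 2) ≤
      ((∑ i ∈ Icc 1 n, a i) / n) / ((∑ i ∈ Icc 1 (n + 1), a i) / (n + 1)) := by
  have key := le_sum_mul_of_monotone ha hrel hh n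
  have hn0 : (0 : ℝ) < n := by exact_mod_cast hn
  have hS : 0 ≤ ∑ i ∈ Icc 1 n, a i := sum_nonneg fun i _ => ha i
  rw [sum_Icc_succ_top (by omega), div_div_div_eq, div_le_div_iff₀ hB (by positivity)]
  linear_combination a (n + 1) * key + (∑ i ∈ Icc 1 n, a i) * hrel n

end MeanRatio

section Calculus

variable {r : ℝ}

theorem rpow_sub_one_mul_sub_le_rpow (hr : 1 ≤ r) {u : ℝ} (hu : 0 ≤ u) :
    (u + 1) ^ (r - 1) * (u + 1 - r) ≤ u ^ r := by
  have hu1 : 0 < u + 1 := by linarith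
  have hs : -1 ≤ -(u + 1)⁻¹ := neg_le_neg (inv_le_one_of_one_le₀ (by linarith))
  have bernoulli := one_add_mul_self_le_rpow_one_add hs hr
  rw [show 1 + -(u + 1)⁻¹ = u / (u + 1) by field_simp; ring, div_rpow hu hu1.le,
    le_div_iff₀ (rpow_pos_of_pos hu1 r)] at bernoulli
  calc (u + 1) ^ (r - 1) * (u + 1 - r) = (1 + r * -(u + 1)⁻¹) * (u + 1) ^ r := by
        rw [rpow_sub_one hu1.ne']; field_simp; ring
    _ ≤ u ^ r := bernoulli

theorem rpow_le_rpow_sub_one_mul_sub (hr0 : 0 ≤ r) (hr : r ≤ 1) {u : ℝ} (hu : 0 ≤ u) :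
    u ^ r ≤ (u + 1) ^ (r - 1) * (u + 1 - r) := by
  have hu1 : 0 < u + 1 := by linarith
  have hs : -1 ≤ -(u + 1)⁻¹ := neg_le_neg (inv_le_one_of_one_le₀ (by linarith))
  have bernoulli := rpow_one_add_le_one_add_mul_self hs hr0 hr
  rw [show 1 + -(u + 1)⁻¹ = u / (u + 1) by field_simp; ring, div_rpow hu hu1.le,
    div_le_iff₀ (rpow_pos_of_pos hu1 r)] at bernoulli
  calc u ^ r ≤ (1 + r * -(u + 1)⁻¹) * (u + 1) ^ r := bernoulli
    _ = (u + 1) ^ (r - 1) * (u + 1 - r) := by rw [rpow_sub_one hu1.ne']; field_simp; ring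

theorem hasDerivAt_rpow_mul_rpow_sub (r : ℝ) {x : ℝ} (hx : -1 < x) :
    HasDerivAt (fun x : ℝ => (x + 2) ^ r * (x + 1) ^ (1 - r) - x)
      ((x + 2) ^ (r - 1) * (x + 2 - r) / (x + 1) ^ r - 1) x := by
  have h1 : 0 < x + 1 := by linarith
  have h2 : 0 < x + 2 := by linarith
  refine ((((hasDerivAt_id' x).add_const 2).rpow_const (p := r) (Or.inl h2.ne')).mul
    (((hasDerivAt_id' x).add_const 1).rpow_const (p := 1 - r) (Or.inl h1.ne'))).sub
    (hasDerivAt_id' x) |>.congr_deriv ?_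
  rw [show (1 : ℝ) - r - 1 = -r by ring, rpow_neg h1.le, show (1 : ℝ) - r = 1 + -r by ring,
    rpow_add h1, rpow_neg h1.le, rpow_one, rpow_sub_one h2.ne']
  field_simp
  ring


theorem antitoneOn_rpow_mul_rpow_sub (hr : 1 ≤ r) :
    AntitoneOn (fun x : ℝ => (x + 2) ^ r * (x + 1) ^ (1 - r) - x) (Set.Ioi (-1)) := by
  refine antitoneOn_of_hasDerivWithinAt_nonpos (convex_Ioi _)
    (f' := fun x => (x + 2) ^ (r - 1) * (x + 2 - r) / (x + 1) ^ r - 1)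
    (fun x hx => (hasDerivAt_rpow_mul_rpow_sub r hx).continuousAt.continuousWithinAt)
    (fun x hx => ?_) (fun x hx => ?_) <;> rw [interior_Ioi] at hx
  · rw [interior_Ioi]
    exact (hasDerivAt_rpow_mul_rpow_sub r hx).hasDerivWithinAt
  · have h1 : 0 < x + 1 := neg_lt_iff_pos_add.mp hx
    have bernoulli := rpow_sub_one_mul_sub_le_rpow hr h1.le
    rw [show x + 1 + 1 = x + 2 by ring] at bernoulli
    rwa [sub_nonpos, div_le_one (rpow_pos_of_pos h1 r)]

theorem monotoneOn_rpow_mul_rpow_sub (hr0 : 0 ≤ r) (hr : r ≤ 1) :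
    MonotoneOn (fun x : ℝ => (x + 2) ^ r * (x + 1) ^ (1 - r) - x) (Set.Ioi (-1)) := by
  refine monotoneOn_of_hasDerivWithinAt_nonneg (convex_Ioi _)
    (f' := fun x => (x + 2) ^ (r - 1) * (x + 2 - r) / (x + 1) ^ r - 1)
    (fun x hx => (hasDerivAt_rpow_mul_rpow_sub r hx).continuousAt.continuousWithinAt)
    (fun x hx => ?_) (fun x hx => ?_) <;> rw [interior_Ioi] at hx
  · rw [interior_Ioi]
    exact (hasDerivAt_rpow_mul_rpow_sub r hx).hasDerivWithinAt
  · have h1 : 0 < x + 1 := neg_lt_iff_pos_add.mp hx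
    have bernoulli := rpow_le_rpow_sub_one_mul_sub hr0 hr h1.le
    rw [show x + 1 + 1 = x + 2 by ring] at bernoulli
    rwa [sub_nonneg, one_le_div (rpow_pos_of_pos h1 r)]

theorem rpow_mul_rpow_mul_rpow_sub (r : ℝ) {x : ℝ} (hx : -1 < x) :
    (x + 1) ^ r * ((x + 2) ^ r * (x + 1) ^ (1 - r) - x) =
      (x + 1) * (x + 2) ^ r - x * (x + 1) ^ r := by
  have h1 : 0 < x + 1 := neg_lt_iff_pos_add.mp hx
  have hmul : (x + 1) ^ r * (x + 1) ^ (1 - r) = x + 1 := by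
    rw [← rpow_add h1, add_sub_cancel, rpow_one]
  linear_combination (x + 2) ^ r * hmul

end Calculus

theorem stmt_18 (n : ℕ) (hn : 1 ≤ n) (r : ℝ) :
    (1 ≤ r →
      (((∑ i ∈ Finset.Icc 1 n, (i : ℝ) ^ r) / n) /
          ((∑ i ∈ Finset.Icc 1 (n + 1), (i : ℝ) ^ r) / (n + 1))) ^ (1 / r) ≤
        (n + 1 : ℝ) / (n + 2)) ∧
    (0 < r → r ≤ 1 →
      (n + 1 : ℝ) / (n + 2) ≤
        (((∑ i ∈ Finset.Icc 1 n, (i : ℝ) ^ r) / n) /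
          ((∑ i ∈ Finset.Icc 1 (n + 1), (i : ℝ) ^ r) / (n + 1))) ^ (1 / r)) := by
  set F : ℝ → ℝ := fun x => (x + 2) ^ r * (x + 1) ^ (1 - r) - x
  have hmem : ∀ m : ℕ, (m : ℝ) ∈ Set.Ioi (-1) := fun m =>
    Set.mem_Ioi.mpr (neg_one_lt_zero.trans_le m.cast_nonneg)
  have ha : ∀ k : ℕ, 0 ≤ (k : ℝ) ^ r := fun k => rpow_nonneg k.cast_nonneg r
  have hrel (m : ℕ) : ((m + 1 : ℕ) : ℝ) ^ r * F m =
      (m + 1) * ((m + 2 : ℕ) : ℝ) ^ r - m * ((m + 1 : ℕ) : ℝ) ^ r := by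
    push_cast; exact rpow_mul_rpow_mul_rpow_sub r (hmem m)
  have hpos (k : ℕ) : 0 < ((k + 1 : ℕ) : ℝ) ^ r := rpow_pos_of_pos (by positivity) r
  have hterms : ((n + 1 : ℕ) : ℝ) ^ r / ((n + 2 : ℕ) : ℝ) ^ r = ((n + 1 : ℝ) / (n + 2)) ^ r := by
    rw [div_rpow (by positivity) (by positivity)]; push_cast; rfl
  refine ⟨fun hr => ?_, fun hr0 hr => ?_⟩
  · rw [one_div, rpow_inv_le_iff_of_pos (by positivity) (by positivity) (by positivity), ← hterms]
    exact mean_ratio_le_of_antitone (a := fun k : ℕ => (k : ℝ) ^ r) ha hrel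
      (fun i j hij => antitoneOn_rpow_mul_rpow_sub hr (hmem i) (hmem j) (by exact_mod_cast hij))
      hn (hpos n) (hpos (n + 1))
  · rw [one_div, le_rpow_inv_iff_of_pos (by positivity) (by positivity) hr0, ← hterms]
    exact mean_ratio_ge_of_monotone (a := fun k : ℕ => (k : ℝ) ^ r) ha hrel
      (fun i j hij => monotoneOn_rpow_mul_rpow_sub hr0.le hr (hmem i) (hmem j) (by exact_mod_cast hij))
      hn (hpos n) (hpos (n + 1))
end
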